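/- arXiv:2601.06523 — 7 statements merged into one kernel-verified Lean document; each statement's English description precedes it below -/
import Mathlib

section
/- Let f : X → X be a homeomorphism of a compact metric space and S ⊆ X a subset. If 0 < b < c and f is expansive on B_c(S) and has shadowing on B_c(S), then f has L-shadowing on B_b(S). -/
open Metric Filter Topology Set

variable {X : Type*}

/-- `(c i)_{i=0}^k` is a `δ`-chain of `f` (up to index `k`). -/
def IsDeltaChain [MetricSpace X] (f : X → X) (δ : ℝ) (k : ℕ) (c : ℕ → X) : Prop :=
  ∀ i < k, dist (f (c i)) (c (i + 1)) ≤ δ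

/-- `x → y` : for every `δ > 0` there is a `δ`-chain from `x` to `y`. -/
def ChainReach [MetricSpace X] (f : X → X) (x y : X) : Prop :=
  ∀ δ > 0, ∃ k ≥ 1, ∃ c : ℕ → X, c 0 = x ∧ c k = y ∧ IsDeltaChain f δ k c

/-- The chain recurrent set. -/
def ChainRec [MetricSpace X] (f : X → X) : Set X := {x | ChainReach f x x}

/-- `C` is a chain component of `f`. -/
def IsChainComponent [MetricSpace X] (f : X → X) (C : Set X) : Prop :=
  ∃ x, ChainReach f x x ∧
    C = {y | ChainReach f y y ∧ ChainReach f x y ∧ ChainReach f y x}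

/-- A set is chain stable iff points chain-reachable from it stay in it. -/
def ChainStable [MetricSpace X] (f : X → X) (S : Set X) : Prop :=
  ∀ x ∈ S, ∀ y, ChainReach f x y → y ∈ S

/-- `S` is "initially stable": if `y → x` with `x ∈ S` then `y ∈ S`. -/
def InitialStable [MetricSpace X] (f : X → X) (S : Set X) : Prop :=
  ∀ x ∈ S, ∀ y, ChainReach f y x → y ∈ S

/-- `f` restricted to `Λ` is chain transitive. -/
def ChainTransitiveOn [MetricSpace X] (f : X → X) (Λ : Set X) : Prop :=
  ∀ p ∈ Λ, ∀ q ∈ Λ, ∀ δ > 0, ∃ k ≥ 1, ∃ c : ℕ → X,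
    c 0 = p ∧ c k = q ∧ (∀ i ≤ k, c i ∈ Λ) ∧ IsDeltaChain f δ k c

/-- `f` has shadowing on `S`. -/
def ShadowsOn [MetricSpace X] (f : X → X) (S : Set X) : Prop :=
  ∀ ε > 0, ∃ δ > 0, ∀ (k : ℕ) (c : ℕ → X), (∀ i ≤ k, c i ∈ S) →
    IsDeltaChain f δ k c → ∃ x, ∀ i ≤ k, dist (c i) (f^[i] x) ≤ ε

/-- Iterate of a homeomorphism indexed by `ℤ`. -/
def hIter [TopologicalSpace X] (f : X ≃ₜ X) (i : ℤ) : X → X :=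
  if 0 ≤ i then (⇑f)^[i.toNat] else (⇑f.symm)^[(-i).toNat]

/-- A `δ`-limit-pseudo orbit of the homeomorphism `f`. -/
def IsLimitPseudoOrbit [MetricSpace X] (f : X ≃ₜ X) (δ : ℝ) (ξ : ℤ → X) : Prop :=
  (∀ i : ℤ, dist (f (ξ i)) (ξ (i + 1)) ≤ δ) ∧
  Tendsto (fun i : ℤ => dist (f (ξ i)) (ξ (i + 1))) atBot (nhds 0) ∧
  Tendsto (fun i : ℤ => dist (f (ξ i)) (ξ (i + 1))) atTop (nhds 0)

/-- `f` has L-shadowing on `S`. -/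
def LShadowsOn [MetricSpace X] (f : X ≃ₜ X) (S : Set X) : Prop :=
  ∀ ε > 0, ∃ δ > 0, ∀ ξ : ℤ → X, (∀ i : ℤ, ξ i ∈ S) →
    IsLimitPseudoOrbit f δ ξ →
    ∃ x : X, (∀ i : ℤ, dist (ξ i) (hIter f i x) ≤ ε) ∧
      Tendsto (fun i : ℤ => dist (ξ i) (hIter f i x)) atBot (nhds 0) ∧
      Tendsto (fun i : ℤ => dist (ξ i) (hIter f i x)) atTop (nhds 0)

/-- `f` is expansive on `S`. -/
def ExpansiveOn [MetricSpace X] (f : X ≃ₜ X) (S : Set X) : Prop :=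
  ∃ e > 0, ∀ x y : X, (∀ i : ℤ, hIter f i x ∈ S) → (∀ i : ℤ, hIter f i y ∈ S) →
    (∀ i : ℤ, dist (hIter f i x) (hIter f i y) ≤ e) → x = y

/-- Closed `b`-neighborhood of `S`. -/
def Nbhd [MetricSpace X] (b : ℝ) (S : Set X) : Set X := {x | Metric.infDist x S ≤ b}

/-- Attractor for a continuous map `f`. -/
def IsAttractor [TopologicalSpace X] (f : X → X) (Λ : Set X) : Prop :=
  IsClosed Λ ∧ f '' Λ = Λ ∧
    ∃ U : Set X, IsOpen U ∧ f '' closure U ⊆ U ∧ Λ = ⋂ i : ℕ, f^[i] '' U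

/-- `f` is (topologically) mixing. -/
def IsMixing [TopologicalSpace X] (f : X → X) : Prop :=
  ∀ U V : Set X, IsOpen U → IsOpen V → U.Nonempty → V.Nonempty →
    ∃ j : ℕ, ∀ i ≥ j, (f^[i] '' U ∩ V).Nonempty

/-- The ω-limit set of `x` under `f`. -/
def OmegaSet [TopologicalSpace X] (f : X → X) (x : X) : Set X :=
  {y | ∃ φ : ℕ → ℕ, StrictMono φ ∧ Tendsto (fun j => f^[φ j] x) atTop (nhds y)}

/-- `M` is a minimal set for `f`. -/
def IsMinimalSet [TopologicalSpace X] (f : X → X) (M : Set X) : Prop :=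
  M.Nonempty ∧ IsClosed M ∧ f '' M ⊆ M ∧ ∀ x ∈ M, OmegaSet f x = M


section Aux

variable [MetricSpace X]

lemma hIter_natCast (f : X ≃ₜ X) (n : ℕ) : hIter f (n : ℤ) = (⇑f)^[n] := by
  simp [hIter]

lemma hIter_zero (f : X ≃ₜ X) : hIter f 0 = id := by
  simp [hIter]

lemma continuous_hIter (f : X ≃ₜ X) (i : ℤ) : Continuous (hIter f i) := by
  unfold hIter
  split
  · exact f.continuous.iterate _
  · exact f.symm.continuous.iterate _

lemma hIter_succ (f : X ≃ₜ X) (i : ℤ) (x : X) : hIter f (i + 1) x = f (hIter f i x) := by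
  unfold hIter
  rcases le_or_gt 0 i with h | h
  · rw [if_pos (show (0:ℤ) ≤ i + 1 by omega), if_pos h]
    have e : (i + 1).toNat = i.toNat + 1 := by omega
    rw [e, Function.iterate_succ_apply']
  · rw [if_neg (show ¬ (0:ℤ) ≤ i by omega)]
    rcases eq_or_lt_of_le (show i + 1 ≤ 0 by omega) with h1 | h1
    · rw [if_pos (le_of_eq h1.symm)]
      have h2 : (-i).toNat = 1 := by omega
      have h3 : (i + 1).toNat = 0 := by omega
      rw [h2, h3]
      simp
    · rw [if_neg (show ¬ (0:ℤ) ≤ i + 1 by omega)]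
      have e : (-i).toNat = (-(i + 1)).toNat + 1 := by omega
      rw [e, Function.iterate_succ_apply']
      exact (f.apply_symm_apply _).symm

lemma hIter_pred (f : X ≃ₜ X) (i : ℤ) (x : X) : hIter f (i - 1) x = f.symm (hIter f i x) := by
  have h := hIter_succ f (i - 1) x
  rw [sub_add_cancel] at h
  rw [h, f.symm_apply_apply]

lemma hIter_add (f : X ≃ₜ X) (i j : ℤ) (x : X) :
    hIter f (i + j) x = hIter f i (hIter f j x) := by
  induction i using Int.induction_on with
  | zero => simp [hIter_zero]
  | succ k ih =>
      have e : (k : ℤ) + 1 + j = (k + j) + 1 := by ring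
      rw [e, hIter_succ, ih, ← hIter_succ]
  | pred k ih =>
      have e : -(k : ℤ) - 1 + j = (-(k : ℤ) + j) - 1 := by ring
      rw [e, hIter_pred, ih, ← hIter_pred]

lemma nbhd_closed (b : ℝ) (S : Set X) : IsClosed (Nbhd b S) :=
  isClosed_le (Metric.continuous_infDist_pt S) continuous_const

lemma shadow_all [CompactSpace X] (f : X ≃ₜ X) (T : Set X) (ε δ : ℝ)
    (hsh : ∀ (k : ℕ) (c : ℕ → X), (∀ i ≤ k, c i ∈ T) →
      IsDeltaChain (⇑f) δ k c → ∃ x, ∀ i ≤ k, dist (c i) ((⇑f)^[i] x) ≤ ε)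
    (ξ : ℤ → X) (hmem : ∀ i, ξ i ∈ T)
    (hchain : ∀ i : ℤ, dist (f (ξ i)) (ξ (i + 1)) ≤ δ) :
    ∃ x, ∀ i : ℤ, dist (ξ i) (hIter f i x) ≤ ε := by
  have h1 : ∀ n : ℕ, ∃ y : X, ∀ j : ℤ, -(n : ℤ) ≤ j → j ≤ n →
      dist (ξ j) (hIter f j y) ≤ ε := by
    intro n
    obtain ⟨x, hx⟩ := hsh (2 * n) (fun i => ξ ((i : ℤ) - n)) (fun i _ => hmem _)
      (by
        intro i _
        have e : (((i + 1 : ℕ)) : ℤ) - (n : ℤ) = ((i : ℤ) - n) + 1 := by push_cast; ring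
        simp only [e]
        exact hchain ((i : ℤ) - n))
    refine ⟨(⇑f)^[n] x, fun j hj1 hj2 => ?_⟩
    have hi : ((j + n).toNat : ℤ) = j + n := Int.toNat_of_nonneg (by omega)
    have hle : (j + n).toNat ≤ 2 * n := by omega
    have hx2 := hx (j + n).toNat hle
    have e1 : (((j + n).toNat : ℕ) : ℤ) - (n : ℤ) = j := by omega
    rw [e1] at hx2
    have e2 : (⇑f)^[(j + n).toNat] x = hIter f j ((⇑f)^[n] x) := by
      rw [← hIter_natCast f, ← hIter_natCast f n, ← hIter_add, hi]
    rwa [e2] at hx2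
  choose y hy using h1
  obtain ⟨x, -, φ, hφ, hlim⟩ := isCompact_univ.tendsto_subseq (fun n => mem_univ (y n))
  refine ⟨x, fun j => ?_⟩
  have h2 : Tendsto (fun k => hIter f j (y (φ k))) atTop (nhds (hIter f j x)) :=
    ((continuous_hIter f j).tendsto x).comp hlim
  have hc : Tendsto (fun k => dist (ξ j) (hIter f j (y (φ k)))) atTop
      (nhds (dist (ξ j) (hIter f j x))) := Tendsto.dist tendsto_const_nhds h2
  refine le_of_tendsto hc (eventually_atTop.2 ⟨j.natAbs, fun k hk => ?_⟩)
  have h3 : k ≤ φ k := hφ.le_apply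
  exact hy (φ k) j (by omega) (by omega)

lemma key_eq [CompactSpace X] (f : X ≃ₜ X) (S : Set X) (b c e ε : ℝ)
    (hε0 : 0 ≤ ε) (hεe : ε ≤ e) (hbεc : b + ε ≤ c)
    (hexp : ∀ x y : X, (∀ i : ℤ, hIter f i x ∈ Nbhd c S) →
      (∀ i : ℤ, hIter f i y ∈ Nbhd c S) →
      (∀ i : ℤ, dist (hIter f i x) (hIter f i y) ≤ e) → x = y)
    (ξ : ℤ → X) (hmem : ∀ i, ξ i ∈ Nbhd b S)
    (x : X) (hshx : ∀ i, dist (ξ i) (hIter f i x) ≤ ε)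
    (n : ℕ → ℤ)
    (herr : ∀ j : ℤ, Tendsto (fun k => dist (f (ξ (n k + j))) (ξ (n k + j + 1)))
      atTop (nhds 0))
    (η z : X)
    (hη : Tendsto (fun k => ξ (n k)) atTop (nhds η))
    (hz : Tendsto (fun k => hIter f (n k) x) atTop (nhds z)) :
    η = z := by
  have hshift : ∀ j : ℤ, Tendsto (fun k => ξ (n k + j)) atTop (nhds (hIter f j η)) := by
    intro j
    induction j using Int.induction_on with
    | zero => simpa [hIter_zero] using hη
    | succ m ih =>
        have h1 : Tendsto (fun k => f (ξ (n k + m))) atTop (nhds (f (hIter f m η))) :=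
          (f.continuous.tendsto _).comp ih
        have h3 : Tendsto (fun k => ξ (n k + m + 1)) atTop (nhds (f (hIter f m η))) :=
          h1.congr_dist (herr m)
        have e : ∀ k, n k + ((m : ℤ) + 1) = n k + m + 1 := fun k => by ring
        rw [hIter_succ]
        exact h3.congr fun k => by rw [e k]
    | pred m ih =>
        have h2 := herr (-(m : ℤ) - 1)
        have hih : Tendsto (fun k => ξ (n k + (-(m : ℤ) - 1) + 1)) atTop
            (nhds (hIter f (-(m : ℤ)) η)) := by
          refine ih.congr fun k => ?_
          congr 1
          ring
        have h4 : Tendsto (fun k => f (ξ (n k + (-(m : ℤ) - 1)))) atTop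
            (nhds (hIter f (-(m : ℤ)) η)) := by
          refine hih.congr_dist ?_
          simpa [dist_comm] using h2
        have h5 : Tendsto (fun k => f.symm (f (ξ (n k + (-(m : ℤ) - 1))))) atTop
            (nhds (f.symm (hIter f (-(m : ℤ)) η))) := (f.symm.continuous.tendsto _).comp h4
        rw [show -(m : ℤ) - 1 = -(m : ℤ) - 1 from rfl, hIter_pred]
        exact h5.congr fun k => by rw [f.symm_apply_apply]
  have hshift2 : ∀ j : ℤ, Tendsto (fun k => hIter f (n k + j) x) atTop
      (nhds (hIter f j z)) := by
    intro j
    have h1 : Tendsto (fun k => hIter f j (hIter f (n k) x)) atTop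
        (nhds (hIter f j z)) := ((continuous_hIter f j).tendsto z).comp hz
    exact h1.congr fun k => by rw [← hIter_add, add_comm]
  have hmemη : ∀ j : ℤ, hIter f j η ∈ Nbhd b S := fun j =>
    (nbhd_closed b S).mem_of_tendsto (hshift j) (Eventually.of_forall fun k => hmem _)
  have hdistj : ∀ j : ℤ, dist (hIter f j η) (hIter f j z) ≤ ε := fun j =>
    le_of_tendsto ((hshift j).dist (hshift2 j)) (Eventually.of_forall fun k => hshx _)
  have hmemη' : ∀ j : ℤ, hIter f j η ∈ Nbhd c S := by
    intro j
    have h3 : Metric.infDist (hIter f j η) S ≤ b := hmemη j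
    show Metric.infDist (hIter f j η) S ≤ c
    linarith
  have hmemz : ∀ j : ℤ, hIter f j z ∈ Nbhd c S := by
    intro j
    have h1 : Metric.infDist (hIter f j z) S ≤
        Metric.infDist (hIter f j η) S + dist (hIter f j z) (hIter f j η) :=
      Metric.infDist_le_infDist_add_dist
    have h2 : dist (hIter f j z) (hIter f j η) ≤ ε := by
      rw [dist_comm]; exact hdistj j
    have h3 : Metric.infDist (hIter f j η) S ≤ b := hmemη j
    show Metric.infDist (hIter f j z) S ≤ c
    linarith
  exact hexp η z hmemη' hmemz fun j => (hdistj j).trans hεe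

lemma key_false [CompactSpace X] (f : X ≃ₜ X) (S : Set X) (b c e ε : ℝ)
    (hε0 : 0 ≤ ε) (hεe : ε ≤ e) (hbεc : b + ε ≤ c)
    (hexp : ∀ x y : X, (∀ i : ℤ, hIter f i x ∈ Nbhd c S) →
      (∀ i : ℤ, hIter f i y ∈ Nbhd c S) →
      (∀ i : ℤ, dist (hIter f i x) (hIter f i y) ≤ e) → x = y)
    (ξ : ℤ → X) (hmem : ∀ i, ξ i ∈ Nbhd b S)
    (x : X) (hshx : ∀ i, dist (ξ i) (hIter f i x) ≤ ε)
    (n : ℕ → ℤ)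
    (herr : ∀ j : ℤ, Tendsto (fun k => dist (f (ξ (n k + j))) (ξ (n k + j + 1)))
      atTop (nhds 0))
    (ε₀ : ℝ) (hε₀ : 0 < ε₀)
    (hlow : ∀ k, ε₀ ≤ dist (ξ (n k)) (hIter f (n k) x)) : False := by
  obtain ⟨η, -, φ₁, hφ₁, hl1⟩ := isCompact_univ.tendsto_subseq (fun k => mem_univ (ξ (n k)))
  obtain ⟨z, -, φ₂, hφ₂, hl2⟩ := isCompact_univ.tendsto_subseq
    (fun k => mem_univ ((fun k => hIter f (n (φ₁ k)) x) k))
  set ψ : ℕ → ℤ := fun k => n (φ₁ (φ₂ k)) with hψ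
  have hmono : Tendsto (fun k => φ₁ (φ₂ k)) atTop atTop :=
    hφ₁.tendsto_atTop.comp hφ₂.tendsto_atTop
  have herr' : ∀ j : ℤ, Tendsto (fun k => dist (f (ξ (ψ k + j))) (ξ (ψ k + j + 1)))
      atTop (nhds 0) := fun j => (herr j).comp hmono
  have hη' : Tendsto (fun k => ξ (ψ k)) atTop (nhds η) := hl1.comp hφ₂.tendsto_atTop
  have hz' : Tendsto (fun k => hIter f (ψ k) x) atTop (nhds z) := hl2
  have heq : η = z := key_eq f S b c e ε hε0 hεe hbεc hexp ξ hmem x hshx ψ herr' η z hη' hz'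
  have hlim : Tendsto (fun k => dist (ξ (ψ k)) (hIter f (ψ k) x)) atTop (nhds 0) := by
    have := hη'.dist hz'
    rwa [heq, dist_self] at this
  have : ε₀ ≤ 0 := ge_of_tendsto hlim (Eventually.of_forall fun k => hlow (φ₁ (φ₂ k)))
  linarith

end Aux

theorem stmt0 [MetricSpace X] [CompactSpace X] (f : X ≃ₜ X) (S : Set X)
    (b c : ℝ) (hb : 0 < b) (hbc : b < c)
    (hexp : ExpansiveOn f (Nbhd c S)) (hsh : ShadowsOn (⇑f) (Nbhd c S)) :
    LShadowsOn f (Nbhd b S) := by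
  obtain ⟨e, he, hexpP⟩ := hexp
  intro ε hε
  set ε' := min ε (min e (c - b)) with hε'def
  have hε'0 : 0 < ε' := lt_min hε (lt_min he (by linarith))
  obtain ⟨δ, hδ, hδP⟩ := hsh ε' hε'0
  refine ⟨δ, hδ, ?_⟩
  intro ξ hmem hlpo
  obtain ⟨hchain, hbot, htop⟩ := hlpo
  have hbc' : ∀ i, ξ i ∈ Nbhd c S := fun i => le_trans (hmem i) (le_of_lt hbc)
  obtain ⟨x, hx⟩ := shadow_all f (Nbhd c S) ε' δ hδP ξ hbc' hchain
  have hε'ε : ε' ≤ ε := min_le_left _ _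
  have hε'e : ε' ≤ e := (min_le_right _ _).trans (min_le_left _ _)
  have hbεc : b + ε' ≤ c := by
    have h1 : ε' ≤ c - b := (min_le_right _ _).trans (min_le_right _ _)
    linarith
  have hfreq : ∀ (l : Filter ℤ),
      ¬ Tendsto (fun i : ℤ => dist (ξ i) (hIter f i x)) l (nhds 0) →
      ∃ ε₀ > 0, ∃ᶠ i in l, ε₀ ≤ dist (ξ i) (hIter f i x) := by
    intro l hcon
    rw [Metric.tendsto_nhds] at hcon
    push_neg at hcon
    obtain ⟨ε₀, hε₀, hf⟩ := hcon
    refine ⟨ε₀, hε₀, (Filter.not_eventually.1 hf).mono fun i hi => ?_⟩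
    have h2 : ε₀ ≤ dist (dist (ξ i) (hIter f i x)) 0 := not_not.1 hi
    rwa [Real.dist_0_eq_abs, abs_of_nonneg dist_nonneg] at h2
  refine ⟨x, fun i => (hx i).trans hε'ε, ?_, ?_⟩
  · by_contra hcon
    obtain ⟨ε₀, hε₀, hf⟩ := hfreq _ hcon
    have hf' : ∀ N : ℤ, ∃ i ≤ N, ε₀ ≤ dist (ξ i) (hIter f i x) := frequently_atBot.1 hf
    have hsel : ∀ k : ℕ, ∃ i : ℤ, i ≤ -(k : ℤ) ∧ ε₀ ≤ dist (ξ i) (hIter f i x) := by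
      intro k
      obtain ⟨i, hi1, hi2⟩ := hf' (-(k : ℤ))
      exact ⟨i, hi1, hi2⟩
    choose n hn1 hn2 using hsel
    have hnbot : Tendsto n atTop atBot := by
      refine tendsto_atBot_mono hn1 ?_
      exact tendsto_neg_atTop_atBot.comp tendsto_natCast_atTop_atTop
    have herr : ∀ j : ℤ, Tendsto (fun k => dist (f (ξ (n k + j))) (ξ (n k + j + 1)))
        atTop (nhds 0) := by
      intro j
      have h1 : Tendsto (fun k => n k + j) atTop atBot :=
        tendsto_atBot_add_const_right _ j hnbot
      exact hbot.comp h1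
    exact key_false f S b c e ε' hε'0.le hε'e hbεc hexpP ξ hmem x hx n herr ε₀ hε₀ hn2
  · by_contra hcon
    obtain ⟨ε₀, hε₀, hf⟩ := hfreq _ hcon
    have hf' : ∀ N : ℤ, ∃ i ≥ N, ε₀ ≤ dist (ξ i) (hIter f i x) := frequently_atTop.1 hf
    have hsel : ∀ k : ℕ, ∃ i : ℤ, (k : ℤ) ≤ i ∧ ε₀ ≤ dist (ξ i) (hIter f i x) := by
      intro k
      obtain ⟨i, hi1, hi2⟩ := hf' (k : ℤ)
      exact ⟨i, hi1, hi2⟩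
    choose n hn1 hn2 using hsel
    have hntop : Tendsto n atTop atTop :=
      tendsto_atTop_mono hn1 tendsto_natCast_atTop_atTop
    have herr : ∀ j : ℤ, Tendsto (fun k => dist (f (ξ (n k + j))) (ξ (n k + j + 1)))
        atTop (nhds 0) := by
      intro j
      have h1 : Tendsto (fun k => n k + j) atTop atTop :=
        tendsto_atTop_add_const_right _ j hntop
      exact htop.comp h1
    exact key_false f S b c e ε' hε'0.le hε'e hbεc hexpP ξ hmem x hx n herr ε₀ hε₀ hn2
end

section
/- Let f : X → X be a continuous map of a compact metric space and C a chain component of f. For any b > 0 there exists a > 0 such that any chain component D of f intersecting B_a(C) is contained in B_b(C). -/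
open Metric Filter Topology Set

variable {X : Type*}

lemma chainReach_trans [MetricSpace X] {f : X → X} {x y z : X}
    (h1 : ChainReach f x y) (h2 : ChainReach f y z) : ChainReach f x z := by
  intro δ hδ
  obtain ⟨k, hk, c, hc0, hck, hc⟩ := h1 δ hδ
  obtain ⟨m, hm, d, hd0, hdm, hd⟩ := h2 δ hδ
  refine ⟨k + m, by omega, fun i => if i ≤ k then c i else d (i - k), by simp [hc0], ?_, ?_⟩
  · simp only [if_neg (by omega : ¬ k + m ≤ k)]
    simpa [Nat.add_sub_cancel_left] using hdm
  · intro i hi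
    by_cases h : i + 1 ≤ k
    · simp only [if_pos (by omega : i ≤ k), if_pos h]
      exact hc i (by omega)
    · simp only [if_neg h]
      by_cases h' : i ≤ k
      · have hik : i = k := by omega
        subst hik
        have h1 := hd 0 (by omega)
        simp only [if_pos le_rfl, hck, ← hd0]
        have he : i + 1 - i = 1 := by omega
        rw [he]
        simpa using h1
      · simp only [if_neg h']
        have h1 := hd (i - k) (by omega)
        have he : i + 1 - k = (i - k) + 1 := by omega
        rw [he]
        exact h1

lemma chainReach_limit [MetricSpace X] {f : X → X} (hf : Continuous f)
    {u v : ℕ → X} {x y : X} (h : ∀ n, ChainReach f (u n) (v n))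
    (hu : Tendsto u atTop (𝓝 x)) (hv : Tendsto v atTop (𝓝 y)) :
    ChainReach f x y := by
  intro δ hδ
  have hδ3 : 0 < δ / 3 := by linarith
  obtain ⟨ε, hε, hfx⟩ := Metric.continuous_iff.mp hf x (δ / 3) hδ3
  obtain ⟨N1, hN1⟩ := Metric.tendsto_atTop.mp hu ε hε
  obtain ⟨N2, hN2⟩ := Metric.tendsto_atTop.mp hv (δ / 3) hδ3
  set n := max N1 N2 with hn
  have hun : dist (f (u n)) (f x) < δ / 3 := hfx (u n) (hN1 n (le_max_left _ _))
  have hvn : dist (v n) y < δ / 3 := hN2 n (le_max_right _ _)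
  obtain ⟨k, hk, c, hc0, hck, hc⟩ := h n (δ / 3) hδ3
  have hk0 : k ≠ 0 := by omega
  refine ⟨k, hk, fun i => if i = 0 then x else if i = k then y else c i,
    by simp, by simp [hk0], ?_⟩
  intro i hi
  have hi1 : i + 1 ≠ 0 := by omega
  by_cases h0 : i = 0
  · subst h0
    simp only [if_pos rfl, hi1, if_neg hi1]
    by_cases h1 : 1 = k
    · rw [if_pos h1]
      have hc01 := hc 0 (by omega)
      rw [hc0] at hc01
      have : c 1 = v n := by rw [← h1] at hck; exact hck
      rw [this] at hc01
      calc dist (f x) y ≤ dist (f x) (f (u n)) + dist (f (u n)) (v n) + dist (v n) y :=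
            dist_triangle4 _ _ _ _
        _ ≤ δ := by rw [dist_comm (f x)]; linarith
    · rw [if_neg h1]
      have hc01 := hc 0 (by omega)
      rw [hc0] at hc01
      calc dist (f x) (c 1) ≤ dist (f x) (f (u n)) + dist (f (u n)) (c 1) := dist_triangle _ _ _
        _ ≤ δ := by rw [dist_comm (f x)]; linarith
  · have hik : i ≠ k := by omega
    simp only [if_neg h0, if_neg hik]
    by_cases h1 : i + 1 = k
    · simp only [if_neg hi1, if_pos h1]
      have hci := hc i hi
      have : c (i + 1) = v n := by rw [h1, hck]
      rw [this] at hci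
      calc dist (f (c i)) y ≤ dist (f (c i)) (v n) + dist (v n) y := dist_triangle _ _ _
        _ ≤ δ := by linarith
    · simp only [if_neg hi1, if_neg h1]
      have := hc i hi
      linarith

theorem stmt1 [MetricSpace X] [CompactSpace X] (f : X → X) (hf : Continuous f)
    (C : Set X) (hC : IsChainComponent f C) (b : ℝ) (hb : 0 < b) :
    ∃ a > 0, ∀ D : Set X, IsChainComponent f D →
      (D ∩ Nbhd a C).Nonempty → D ⊆ Nbhd b C := by
  obtain ⟨x0, hx0, hCdef⟩ := hC
  have hx0C : x0 ∈ C := by rw [hCdef]; exact ⟨hx0, hx0, hx0⟩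
  have hCne : C.Nonempty := ⟨x0, hx0C⟩
  by_contra hcon
  push_neg at hcon
  have key : ∀ n : ℕ, ∃ p q : X, ChainReach f p q ∧ ChainReach f q p ∧
      infDist p C ≤ 1 / ((n : ℝ) + 1) ∧ b < infDist q C := by
    intro n
    obtain ⟨D, hD, hne, hnsub⟩ := hcon (1 / ((n : ℝ) + 1)) (by positivity)
    obtain ⟨p, hpD, hpN⟩ := hne
    obtain ⟨q, hqD, hqN⟩ := Set.not_subset.mp hnsub
    obtain ⟨z, hz, hDdef⟩ := hD
    rw [hDdef] at hpD hqD
    simp only [Nbhd, mem_setOf_eq] at hpN hqN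
    exact ⟨p, q, chainReach_trans hpD.2.2 hqD.2.1, chainReach_trans hqD.2.2 hpD.2.1,
      hpN, lt_of_not_ge hqN⟩
  choose p q hpq hqp hpC hqC using key
  obtain ⟨l, -, φ, hφ, hl⟩ := isCompact_univ.tendsto_subseq
    (x := fun n => (p n, q n)) (fun n => mem_univ _)
  have hp : Tendsto (fun n => p (φ n)) atTop (𝓝 l.1) := (continuous_fst.tendsto l).comp hl
  have hq : Tendsto (fun n => q (φ n)) atTop (𝓝 l.2) := (continuous_snd.tendsto l).comp hl
  have h0 : Tendsto (fun n : ℕ => 1 / ((φ n : ℝ) + 1)) atTop (𝓝 0) :=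
    tendsto_one_div_add_atTop_nhds_zero_nat.comp hφ.tendsto_atTop
  have hl1 : infDist l.1 C = 0 := by
    have h1 : Tendsto (fun n => infDist (p (φ n)) C) atTop (𝓝 (infDist l.1 C)) :=
      ((continuous_infDist_pt C).tendsto l.1).comp hp
    have := le_of_tendsto_of_tendsto' h1 h0 (fun n => hpC (φ n))
    exact le_antisymm this infDist_nonneg
  have hbl2 : b ≤ infDist l.2 C := by
    have h2 : Tendsto (fun n => infDist (q (φ n)) C) atTop (𝓝 (infDist l.2 C)) :=
      ((continuous_infDist_pt C).tendsto l.2).comp hq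
    exact le_of_tendsto_of_tendsto' tendsto_const_nhds h2 (fun n => (hqC (φ n)).le)
  have hcn : ∀ n : ℕ, ∃ w ∈ C, dist (p n) w < 2 / ((n : ℝ) + 1) := by
    intro n
    have hlt : infDist (p n) C < 2 / ((n : ℝ) + 1) := by
      refine lt_of_le_of_lt (hpC n) ?_
      have hpos : (0:ℝ) < (n : ℝ) + 1 := by positivity
      have h1 := one_div_pos.mpr hpos
      rw [show (2:ℝ) / ((n:ℝ)+1) = 1/((n:ℝ)+1) + 1/((n:ℝ)+1) by ring]
      linarith
    exact (infDist_lt_iff hCne).mp hlt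
  choose cs hcsC hcsd using hcn
  have hcs : Tendsto (fun n => cs (φ n)) atTop (𝓝 l.1) := by
    rw [tendsto_iff_dist_tendsto_zero]
    have hbound : ∀ n, dist (cs (φ n)) l.1 ≤ 2 / ((φ n : ℝ) + 1) + dist (p (φ n)) l.1 := by
      intro n
      calc dist (cs (φ n)) l.1 ≤ dist (cs (φ n)) (p (φ n)) + dist (p (φ n)) l.1 :=
            dist_triangle _ _ _
        _ ≤ 2 / ((φ n : ℝ) + 1) + dist (p (φ n)) l.1 := by
            rw [dist_comm]; linarith [hcsd (φ n)]
    have h2 : Tendsto (fun n : ℕ => 2 / ((φ n : ℝ) + 1) + dist (p (φ n)) l.1) atTop (𝓝 0) := by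
      have ha : Tendsto (fun n : ℕ => 2 / ((φ n : ℝ) + 1)) atTop (𝓝 0) := by
        have := h0.const_mul 2
        simpa [mul_one_div, div_eq_mul_inv] using this
      have hbb := tendsto_iff_dist_tendsto_zero.mp hp
      simpa using ha.add hbb
    exact squeeze_zero (fun n => dist_nonneg) hbound h2
  have hmem : ∀ m, ChainReach f x0 (cs m) ∧ ChainReach f (cs m) x0 := by
    intro m
    have := hcsC m
    rw [hCdef] at this
    exact ⟨this.2.1, this.2.2⟩
  have hr1 : ChainReach f x0 l.1 :=
    chainReach_limit hf (fun n => (hmem (φ n)).1) tendsto_const_nhds hcs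
  have hr2 : ChainReach f l.1 x0 :=
    chainReach_limit hf (fun n => (hmem (φ n)).2) hcs tendsto_const_nhds
  have hr3 : ChainReach f l.1 l.2 := chainReach_limit hf (fun n => hpq (φ n)) hp hq
  have hr4 : ChainReach f l.2 l.1 := chainReach_limit hf (fun n => hqp (φ n)) hq hp
  have hxy : ChainReach f x0 l.2 := chainReach_trans hr1 hr3
  have hyx : ChainReach f l.2 x0 := chainReach_trans hr4 hr2
  have hyC : l.2 ∈ C := by rw [hCdef]; exact ⟨chainReach_trans hyx hxy, hxy, hyx⟩
  have : infDist l.2 C = 0 := infDist_zero_of_mem hyC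
  linarith
end

section
/- Let f : X → X be a homeomorphism of a compact metric space and C a chain component of f. If f has L-shadowing on B_b(C) for some b > 0, then C is clopen in CR(f). -/
open Metric Filter Topology Set

variable {X : Type*}

/-!
Chain classes are closed, so only openness in `CR(f)` is at stake. Let `z ∈ CR(f)` be very close
to the class `C` of `p` and let `w ∈ C` be nearest to `z`. Chains `z → z` of small mesh stay in
`B_b(C)`, so the backward orbit of `w` followed by a concatenation of `δₙ`-chains `z → z` with
`δₙ → 0` is a limit pseudo-orbit in `B_b(C)`. An orbit L-shadowing it is asymptotic to `C` in the
past and comes back arbitrarily close to `z` in the future, whence `p → z`. The same argument for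
`f⁻¹`, whose chain relation is the reverse one, gives `z → p`.
-/

section Concatenation

lemma exists_mem_Ico_of_strictMono {s : ℕ → ℕ} (hs : StrictMono s) (hs0 : s 0 = 0) (m : ℕ) :
    ∃ n, s n ≤ m ∧ m < s (n + 1) := by
  induction m with
  | zero => exact ⟨0, hs0.le, hs0.symm.trans_lt (hs Nat.zero_lt_one)⟩
  | succ m ih =>
    obtain ⟨n, h1, h2⟩ := ih
    rcases (show m + 1 ≤ s (n + 1) from h2).eq_or_lt with h | h
    · exact ⟨n + 1, h.ge, by rw [h]; exact hs (Nat.lt_succ_self _)⟩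
    · exact ⟨n, by omega, h⟩

/-- The concatenation of the blocks `c n 0, …, c n (L n)`, glued along `c n (L n) = c (n+1) 0`;
`blk m` is the block containing position `m`. -/
lemma exists_seq_concat {L : ℕ → ℕ} (hL : ∀ n, 1 ≤ L n) {c : ℕ → ℕ → X}
    (hc : ∀ n, c n (L n) = c (n + 1) 0) :
    ∃ (Θ : ℕ → X) (blk : ℕ → ℕ), Θ 0 = c 0 0 ∧ Tendsto blk atTop atTop ∧
      (∀ m, ∃ j < L (blk m), Θ m = c (blk m) j ∧ Θ (m + 1) = c (blk m) (j + 1)) ∧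
      ∀ n, ∃ m ≥ n, Θ m = c n 0 := by
  set s : ℕ → ℕ := fun n => ∑ i ∈ Finset.range n, L i
  have hsucc : ∀ n, s (n + 1) = s n + L n := fun n => Finset.sum_range_succ _ _
  have hs : StrictMono s := strictMono_nat_of_lt_succ fun n => by have := hL n; rw [hsucc]; omega
  choose blk hblk using exists_mem_Ico_of_strictMono hs rfl
  have blk_eq : ∀ {m n}, s n ≤ m → m < s (n + 1) → blk m = n := fun h1 h2 =>
    le_antisymm (Nat.lt_succ_iff.mp (hs.lt_iff_lt.mp ((hblk _).1.trans_lt h2)))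
      (Nat.lt_succ_iff.mp (hs.lt_iff_lt.mp (h1.trans_lt (hblk _).2)))
  have blk_s : ∀ n, blk (s n) = n := fun n => blk_eq le_rfl (hs (Nat.lt_succ_self n))
  refine ⟨fun m => c (blk m) (m - s (blk m)), blk, by simp [show blk 0 = 0 from blk_s 0], ?_,
    fun m => ?_, fun n => ⟨s n, hs.id_le n, by simp [blk_s]⟩⟩
  · refine tendsto_atTop_atTop.mpr fun N => ⟨s N, fun m hm => ?_⟩
    by_contra! hlt
    exact absurd ((hblk m).2.trans_le (hs.monotone hlt)) hm.not_gt
  · obtain ⟨h1, h2⟩ := hblk m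
    refine ⟨m - s (blk m), by rw [hsucc] at h2; omega, rfl, ?_⟩
    rcases (show m + 1 ≤ s (blk m + 1) from h2).lt_or_eq with h | h
    · simp only [blk_eq (h1.trans m.le_succ) h]
      congr 1; omega
    · have hnext : blk (m + 1) = blk m + 1 :=
        blk_eq h.ge (by rw [h]; exact hs (Nat.lt_succ_self _))
      simp only [hnext, ← h, Nat.sub_self, ← hc]
      congr 1; rw [hsucc] at h; omega

end Concatenation

section Chains

variable [MetricSpace X] {f : X → X} {δ δ' ε : ℝ} {k : ℕ} {c : ℕ → X} {x y z : X}

def DeltaChainReach (f : X → X) (δ : ℝ) (x y : X) : Prop :=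
  ∃ k ≥ 1, ∃ c : ℕ → X, c 0 = x ∧ c k = y ∧ IsDeltaChain f δ k c

lemma IsDeltaChain.mono (h : IsDeltaChain f δ k c) (hδ : δ ≤ δ') : IsDeltaChain f δ' k c :=
  fun i hi => (h i hi).trans hδ

lemma IsDeltaChain.deltaChainReach (h : IsDeltaChain f δ k c) {i j : ℕ} (hij : i < j)
    (hjk : j ≤ k) : DeltaChainReach f δ (c i) (c j) :=
  ⟨j - i, by omega, fun n => c (i + n), rfl, by simp only [Nat.add_sub_cancel' hij.le],
    fun n hn => by simpa only [Nat.add_succ] using h (i + n) (by omega)⟩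

lemma DeltaChainReach.mono (h : DeltaChainReach f δ x y) (hδ : δ ≤ δ') :
    DeltaChainReach f δ' x y :=
  let ⟨k, hk, c, h0, hk', hc⟩ := h
  ⟨k, hk, c, h0, hk', hc.mono hδ⟩

lemma DeltaChainReach.trans (hxy : DeltaChainReach f δ x y) (hyz : DeltaChainReach f δ y z) :
    DeltaChainReach f δ x z := by
  obtain ⟨k, hk, c, hc0, hck, hc⟩ := hxy
  obtain ⟨l, hl, d, hd0, hdl, hd⟩ := hyz
  refine ⟨k + l, by omega, fun i => if i ≤ k then c i else d (i - k), by simp [hc0],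
    by simp [show ¬k + l ≤ k by omega, hdl], fun i hi => ?_⟩
  rcases lt_trichotomy i k with h | rfl | h
  · simpa [h.le, Nat.succ_le_of_lt h] using hc i h
  · simpa [hck, ← hd0] using hd 0 hl
  · simpa [h.not_ge, show ¬i + 1 ≤ k by omega, show i + 1 - k = i - k + 1 by omega]
      using hd (i - k) (by omega)

lemma DeltaChainReach.perturb_left (h : DeltaChainReach f δ x y) {x' : X}
    (hx : dist (f x') (f x) ≤ ε) : DeltaChainReach f (δ + ε) x' y := by
  obtain ⟨k, hk, c, hc0, hck, hc⟩ := h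
  refine ⟨k, hk, Function.update c 0 x', by simp, by simp [show k ≠ 0 by omega, hck],
    fun i hi => ?_⟩
  have hε : 0 ≤ ε := dist_nonneg.trans hx
  rcases Nat.eq_zero_or_pos i with rfl | hi0
  · simp only [Function.update_self, Function.update_of_ne (Nat.succ_ne_zero 0)]
    linarith [dist_triangle (f x') (f (c 0)) (c 1), hc 0 hi, hc0 ▸ hx]
  · simp only [Function.update_of_ne hi0.ne', Function.update_of_ne (Nat.succ_ne_zero i)]
    linarith [hc i hi]

lemma DeltaChainReach.perturb_right (h : DeltaChainReach f δ x y) {y' : X}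
    (hy : dist y y' ≤ ε) : DeltaChainReach f (δ + ε) x y' := by
  obtain ⟨k, hk, c, hc0, hck, hc⟩ := h
  refine ⟨k, hk, Function.update c k y', by simp [show (0 : ℕ) ≠ k by omega, hc0], by simp,
    fun i hi => ?_⟩
  have hε : 0 ≤ ε := dist_nonneg.trans hy
  rw [Function.update_of_ne hi.ne]
  by_cases hik : i + 1 = k
  · rw [hik, Function.update_self]
    linarith [dist_triangle (f (c i)) (c k) y', hc i hi, hik ▸ hc i hi, hck ▸ hy]
  · rw [Function.update_of_ne hik]
    linarith [hc i hi]

lemma deltaChainReach_iterate (hδ : 0 ≤ δ) {n : ℕ} (hn : n ≠ 0) :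
    DeltaChainReach f δ x (f^[n] x) :=
  ⟨n, Nat.one_le_iff_ne_zero.mpr hn, fun i => f^[i] x, rfl, rfl, fun i _ => by
    simpa [Function.iterate_succ_apply'] using hδ⟩

lemma ChainReach.trans (hxy : ChainReach f x y) (hyz : ChainReach f y z) : ChainReach f x z :=
  fun δ hδ => DeltaChainReach.trans (hxy δ hδ) (hyz δ hδ)

lemma chainReach_apply (f : X → X) (x : X) : ChainReach f x (f x) :=
  fun _ hδ => deltaChainReach_iterate (n := 1) hδ.le one_ne_zero

lemma exists_seq_tendsto_of_chainReach_self (hz : ChainReach f z z) (hδ : 0 < δ) {S : Set X}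
    (hS : ∀ k c, c 0 = z → c k = z → IsDeltaChain f δ k c → ∀ i ≤ k, c i ∈ S) :
    ∃ Θ : ℕ → X, Θ 0 = z ∧ (∀ m, Θ m ∈ S) ∧ (∀ m, dist (f (Θ m)) (Θ (m + 1)) ≤ δ) ∧
      Tendsto (fun m => dist (f (Θ m)) (Θ (m + 1))) atTop (𝓝 0) ∧ ∃ᶠ m in atTop, Θ m = z := by
  obtain ⟨ε, -, hε, hε0⟩ := exists_seq_strictAnti_tendsto' hδ
  choose L hL c hc0 hcL hc using fun n => hz (ε n) (hε n).1
  obtain ⟨Θ, blk, hΘ0, hblk, hstep, hfreq⟩ :=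
    exists_seq_concat hL (c := c) fun n => (hcL n).trans (hc0 (n + 1)).symm
  have hΘ : ∀ m, Θ m ∈ S ∧ dist (f (Θ m)) (Θ (m + 1)) ≤ ε (blk m) := fun m => by
    obtain ⟨j, hj, h1, h2⟩ := hstep m
    exact ⟨h1 ▸ hS _ _ (hc0 _) (hcL _) ((hc _).mono (hε _).2.le) j hj.le, h1 ▸ h2 ▸ hc _ j hj⟩
  refine ⟨Θ, hΘ0.trans (hc0 0), fun m => (hΘ m).1, fun m => (hΘ m).2.trans (hε _).2.le,
    squeeze_zero (fun _ => dist_nonneg) (fun m => (hΘ m).2) (hε0.comp hblk),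
    frequently_atTop.mpr fun n => ?_⟩
  obtain ⟨m, hm, h⟩ := hfreq n
  exact ⟨m, hm, h.trans (hc0 n)⟩

end Chains

section UniformlyContinuous

variable [MetricSpace X] {f : X → X} {δ : ℝ} {x y z p : X}

lemma chainReach_of_forall_near (hf : UniformContinuous f)
    (h : ∀ δ > 0, ∃ x' y', dist x x' ≤ δ ∧ dist y' y ≤ δ ∧ DeltaChainReach f δ x' y') :
    ChainReach f x y := by
  intro δ hδ
  obtain ⟨s, hs, hfs⟩ := Metric.uniformContinuous_iff_le.mp hf (δ / 3) (by positivity)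
  obtain ⟨x', y', hx, hy, hc⟩ := h (min (δ / 3) s) (by positivity)
  refine ((hc.perturb_left (hfs (hx.trans (min_le_right _ _)))).perturb_right hy).mono ?_
  linarith [min_le_left (δ / 3) s]

lemma chainReach_of_tendsto (hf : UniformContinuous f) {u v : ℕ → X} {ε : ℕ → ℝ}
    (hu : Tendsto u atTop (𝓝 x)) (hv : Tendsto v atTop (𝓝 y)) (hε : Tendsto ε atTop (𝓝 0))
    (h : ∀ n, DeltaChainReach f (ε n) (u n) (v n)) : ChainReach f x y := by
  refine chainReach_of_forall_near hf fun δ hδ => ?_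
  obtain ⟨n, hun, hvn, hεn⟩ := ((Metric.tendsto_nhds.mp hu δ hδ).and
    ((Metric.tendsto_nhds.mp hv δ hδ).and (hε.eventually (eventually_le_nhds hδ)))).exists
  exact ⟨u n, v n, (dist_comm x _).trans_le hun.le, hvn.le, (h n).mono hεn⟩

lemma DeltaChainReach.exists_dist_le_deltaChainReach (hxy : DeltaChainReach f δ x y)
    (hyz : DeltaChainReach f δ y z) : ∃ x₁, dist (f x) x₁ ≤ δ ∧ DeltaChainReach f δ x₁ z := by
  obtain ⟨k, hk, c, hc0, hck, hc⟩ := hxy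
  refine ⟨c 1, hc0 ▸ hc 0 hk, ?_⟩
  rcases hk.eq_or_lt with rfl | hk
  · exact hck ▸ hyz
  · exact (hck ▸ hc.deltaChainReach hk le_rfl).trans hyz

lemma ChainReach.apply_left (hf : UniformContinuous f) (hxy : ChainReach f x y)
    (hyz : ChainReach f y z) : ChainReach f (f x) z :=
  chainReach_of_forall_near hf fun δ hδ => by
    obtain ⟨x₁, hx₁, h⟩ := DeltaChainReach.exists_dist_le_deltaChainReach (hxy δ hδ) (hyz δ hδ)
    exact ⟨x₁, z, hx₁, by simp [hδ.le], h⟩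

def chainClass (f : X → X) (p : X) : Set X := {y | ChainReach f p y ∧ ChainReach f y p}

lemma IsChainComponent.exists_eq_chainClass {C : Set X} (hC : IsChainComponent f C) :
    ∃ p, ChainReach f p p ∧ C = chainClass f p := by
  obtain ⟨p, hp, rfl⟩ := hC
  exact ⟨p, hp, Set.ext fun y => ⟨fun h => h.2, fun h => ⟨h.2.trans h.1, h⟩⟩⟩

lemma isClosed_chainClass (hf : UniformContinuous f) (p : X) : IsClosed (chainClass f p) := by
  refine IsSeqClosed.isClosed fun y z hy hz => ?_
  have h : Tendsto (fun n : ℕ => 1 / ((n : ℝ) + 1)) atTop (𝓝 0) :=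
    tendsto_one_div_add_atTop_nhds_zero_nat
  exact ⟨chainReach_of_tendsto hf tendsto_const_nhds hz h fun n => (hy n).1 _ n.one_div_pos_of_nat,
    chainReach_of_tendsto hf hz tendsto_const_nhds h fun n => (hy n).2 _ n.one_div_pos_of_nat⟩

lemma mapsTo_chainClass (hf : UniformContinuous f) (p : X) :
    MapsTo f (chainClass f p) (chainClass f p) :=
  fun y hy => ⟨hy.1.trans (chainReach_apply f y), hy.2.apply_left hf (hy.1.trans hy.2)⟩

/-- A limit of far points of ever finer such chains would be chain equivalent to the class. -/
lemma exists_pos_forall_infDist_chainClass_le [CompactSpace X] (hf : UniformContinuous f)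
    (hp : ChainReach f p p) {a : ℝ} (ha : 0 < a) :
    ∃ γ > 0, ∀ k c, IsDeltaChain f γ k c → infDist (c 0) (chainClass f p) ≤ γ →
      infDist (c k) (chainClass f p) ≤ γ → ∀ i ≤ k, infDist (c i) (chainClass f p) ≤ a := by
  set C := chainClass f p
  have hmem : ∀ {w : ℕ → X} {w₀ : X} {γ : ℕ → ℝ}, Tendsto w atTop (𝓝 w₀) →
      Tendsto γ atTop (𝓝 0) → (∀ n, infDist (w n) C ≤ γ n) → w₀ ∈ C := fun hw hγ h =>
    ((isClosed_chainClass hf p).mem_iff_infDist_zero ⟨p, hp, hp⟩).mpr <| tendsto_nhds_unique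
      ((continuous_infDist_pt C).tendsto _ |>.comp hw)
      (squeeze_zero (fun _ => infDist_nonneg) h hγ)
  by_contra! h
  obtain ⟨γ, -, hγ, hγ0⟩ := exists_seq_strictAnti_tendsto' ha
  choose k c hc h0 hk i hik hi using fun n => h (γ n) (hγ n).1
  have hi0 : ∀ n, 0 < i n := fun n => Nat.pos_of_ne_zero fun h0' => by
    linarith [h0 n, hi n, (hγ n).2, h0' ▸ hi n]
  have hik' : ∀ n, i n < k n := fun n => (hik n).lt_of_ne fun hk' => by
    linarith [hk n, (hγ n).2, hk' ▸ hi n]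
  obtain ⟨⟨u, y, v⟩, φ, hφ, hlim⟩ :=
    CompactSpace.tendsto_subseq fun n => (c n 0, c n (i n), c n (k n))
  have hu : Tendsto (fun n => c (φ n) 0) atTop (𝓝 u) := (continuous_fst.tendsto _).comp hlim
  have hy : Tendsto (fun n => c (φ n) (i (φ n))) atTop (𝓝 y) :=
    (continuous_fst.comp continuous_snd |>.tendsto _).comp hlim
  have hv : Tendsto (fun n => c (φ n) (k (φ n))) atTop (𝓝 v) :=
    (continuous_snd.comp continuous_snd |>.tendsto _).comp hlim
  have hγφ := hγ0.comp hφ.tendsto_atTop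
  have huC := hmem hu hγφ fun n => h0 (φ n)
  have hvC := hmem hv hγφ fun n => hk (φ n)
  have hyC : y ∈ C :=
    ⟨huC.1.trans <| chainReach_of_tendsto hf hu hy hγφ fun n =>
        (hc (φ n)).deltaChainReach (hi0 _) (hik _),
      (chainReach_of_tendsto hf hy hv hγφ fun n =>
        (hc (φ n)).deltaChainReach (hik' _) le_rfl).trans hvC.2⟩
  have hfar : a ≤ infDist y C := ge_of_tendsto ((continuous_infDist_pt C).tendsto y |>.comp hy)
    (Eventually.of_forall fun n => (hi (φ n)).le)
  linarith [infDist_zero_of_mem hyC]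

end UniformlyContinuous

section Orbits

variable [TopologicalSpace X] (f : X ≃ₜ X)

lemma hIter_symm (i : ℤ) : hIter f.symm i = hIter f (-i) := by
  unfold hIter
  rcases lt_trichotomy i 0 with h | rfl | h
  · simp [h.not_ge, h.le]
  · simp
  · simp [h.le, h.not_ge]

/-- The backward orbit of `w` followed by `Θ`: `…, f⁻² w, f⁻¹ w, Θ 0, Θ 1, …`. -/
def prependOrbit (w : X) (Θ : ℕ → X) (i : ℤ) : X :=
  if i < 0 then (⇑f.symm)^[(-i).toNat] w else Θ i.toNat

end Orbits

section Homeomorph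

variable [MetricSpace X] (f : X ≃ₜ X) {δ : ℝ} {x z : X}

lemma isLimitPseudoOrbit_prependOrbit {w : X} {Θ : ℕ → X} (h0 : dist w (Θ 0) ≤ δ)
    (hΘ : ∀ m, dist (f (Θ m)) (Θ (m + 1)) ≤ δ)
    (hlim : Tendsto (fun m => dist (f (Θ m)) (Θ (m + 1))) atTop (𝓝 0)) :
    IsLimitPseudoOrbit f δ (prependOrbit f w Θ) := by
  set ξ := prependOrbit f w Θ
  have hneg : ∀ i < -1, dist (f (ξ i)) (ξ (i + 1)) = 0 := fun i hi => by
    simp only [ξ, prependOrbit, if_pos (show i < 0 by omega), if_pos (show i + 1 < 0 by omega),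
      show (-i).toNat = (-(i + 1)).toNat + 1 by omega, Function.iterate_succ_apply',
      f.apply_symm_apply, dist_self]
  have hnonneg : ∀ i ≥ 0, dist (f (ξ i)) (ξ (i + 1)) = dist (f (Θ i.toNat)) (Θ (i.toNat + 1)) :=
    fun i hi => by
      simp only [ξ, prependOrbit, if_neg (not_lt.mpr hi), if_neg (show ¬i + 1 < 0 by omega),
        show (i + 1).toNat = i.toNat + 1 by omega]
  have htoNat : Tendsto Int.toNat atTop atTop :=
    tendsto_atTop_atTop.mpr fun n => ⟨n, fun i hi => by omega⟩
  refine ⟨fun i => ?_, Tendsto.congr' ?_ tendsto_const_nhds,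
    Tendsto.congr' ?_ (hlim.comp htoNat)⟩
  · rcases lt_trichotomy i (-1) with h | rfl | h
    · exact (hneg i h).trans_le (dist_nonneg.trans h0)
    · simpa [ξ, prependOrbit] using h0
    · exact (hnonneg i (by omega)).trans_le (hΘ _)
  · filter_upwards [eventually_lt_atBot (-1)] with i hi using (hneg i hi).symm
  · filter_upwards [eventually_ge_atTop 0] with i hi using (hnonneg i hi).symm

lemma chainReach_of_tendsto_atTop {ξ : ℤ → X} (hξ : ∃ᶠ i in atTop, ξ i = z)
    (h : Tendsto (fun i => dist (ξ i) (hIter f i x)) atTop (𝓝 0)) : ChainReach f x z := by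
  intro δ hδ
  obtain ⟨t, hz, htδ, ht⟩ :=
    (hξ.and_eventually ((h.eventually (eventually_le_nhds hδ)).and (eventually_gt_atTop 0))).exists
  have hdist : dist ((⇑f)^[t.toNat] x) z ≤ δ := by
    rwa [hz, dist_comm, hIter, if_pos ht.le] at htδ
  exact ((deltaChainReach_iterate (f := f) (x := x) le_rfl (by omega)).perturb_right hdist).mono
    (zero_add δ).le

lemma DeltaChainReach.homeomorph_symm {s : ℝ}
    (hs : ∀ u v, dist u v ≤ s → dist (f.symm u) (f.symm v) ≤ δ) {x y : X}
    (h : DeltaChainReach f s x y) : DeltaChainReach f.symm δ y x := by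
  obtain ⟨k, hk, c, hc0, hck, hc⟩ := h
  refine ⟨k, hk, fun i => c (k - i), by simp [hck], by simp [hc0], fun i hi => ?_⟩
  have h := hs _ _ ((dist_comm _ _).trans_le (hc (k - (i + 1)) (by omega)))
  rwa [f.symm_apply_apply, show k - (i + 1) + 1 = k - i by omega] at h

variable [CompactSpace X]

lemma ChainReach.homeomorph_symm {x y : X} (h : ChainReach f x y) : ChainReach f.symm y x :=
  fun δ hδ => by
    obtain ⟨s, hs, hfs⟩ := Metric.uniformContinuous_iff_le.mp
      (CompactSpace.uniformContinuous_of_continuous f.symm.continuous) δ hδ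
    exact DeltaChainReach.homeomorph_symm f (fun _ _ h => hfs h) (h s hs)

lemma chainReach_symm_iff {x y : X} : ChainReach f.symm y x ↔ ChainReach f x y :=
  ⟨fun h => by simpa using h.homeomorph_symm f.symm, ChainReach.homeomorph_symm f⟩

lemma chainClass_symm (p : X) : chainClass f.symm p = chainClass f p :=
  Set.ext fun _ => and_comm.trans (and_congr (chainReach_symm_iff f) (chainReach_symm_iff f))

lemma IsLimitPseudoOrbit.comp_neg {s : ℝ} (hs : ∀ u v, dist u v ≤ s → dist (f u) (f v) ≤ δ)
    {ξ : ℤ → X} (h : IsLimitPseudoOrbit f.symm s ξ) :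
    IsLimitPseudoOrbit f δ (fun i => ξ (-i)) := by
  obtain ⟨hstep, hbot, htop⟩ := h
  have hshift : ∀ i, dist (f (ξ (-i))) (ξ (-(i + 1))) =
      dist (f (f.symm (ξ (-(i + 1))))) (f (ξ (-(i + 1) + 1))) := fun i => by
    rw [f.apply_symm_apply, dist_comm, show -(i + 1) + 1 = -i by ring]
  have hf := CompactSpace.uniformContinuous_of_continuous f.continuous
  have hlim : ∀ {l l' : Filter ℤ}, Tendsto (fun i => -(i + 1)) l l' →
      Tendsto (fun j => dist (f.symm (ξ j)) (ξ (j + 1))) l' (𝓝 0) →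
      Tendsto (fun i => dist (f (ξ (-i))) (ξ (-(i + 1)))) l (𝓝 0) := fun hl h => by
    simp only [hshift]
    exact (tendsto_uniformity_iff_dist_tendsto_zero.mp
      (Tendsto.comp hf (tendsto_uniformity_iff_dist_tendsto_zero
        (f := fun j => (f.symm (ξ j), ξ (j + 1))) |>.mpr h))).comp hl
  refine ⟨fun i => (hshift i).trans_le (hs _ _ (hstep _)), hlim ?_ htop, hlim ?_ hbot⟩
  · exact tendsto_atBot_atTop.mpr fun b => ⟨-b - 1, fun i hi => by omega⟩
  · exact tendsto_atTop_atBot.mpr fun b => ⟨-b, fun i hi => by omega⟩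

lemma LShadowsOn.homeomorph_symm {S : Set X} (hL : LShadowsOn f S) : LShadowsOn f.symm S := by
  intro ε hε
  obtain ⟨δ, hδ, hsh⟩ := hL ε hε
  obtain ⟨s, hs, hfs⟩ := Metric.uniformContinuous_iff_le.mp
    (CompactSpace.uniformContinuous_of_continuous f.continuous) δ hδ
  refine ⟨s, hs, fun ξ hξS hξ => ?_⟩
  obtain ⟨x, hx, hbot, htop⟩ :=
    hsh _ (fun i => hξS (-i)) (hξ.comp_neg f fun _ _ h => hfs h)
  refine ⟨x, fun i => by simpa [hIter_symm] using hx (-i), ?_, ?_⟩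
  · simpa [hIter_symm, Function.comp_def] using htop.comp tendsto_neg_atBot_atTop
  · simpa [hIter_symm, Function.comp_def] using hbot.comp tendsto_neg_atTop_atBot

lemma chainReach_of_tendsto_atBot {p : X} {ξ : ℤ → X} (hξ : ∀ᶠ i in atBot, ChainReach f p (ξ i))
    (h : Tendsto (fun i => dist (ξ i) (hIter f i x)) atBot (𝓝 0)) : ChainReach f p x := by
  intro δ hδ
  obtain ⟨s, hs, hfs⟩ := Metric.uniformContinuous_iff_le.mp
    (CompactSpace.uniformContinuous_of_continuous f.continuous) (δ / 2) (half_pos hδ)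
  obtain ⟨t, hpt, hts, ht⟩ :=
    (hξ.and ((h.eventually (eventually_le_nhds hs)).and (eventually_lt_atBot 0))).exists
  have horbit : DeltaChainReach f 0 (hIter f t x) x := by
    simpa [hIter, ht.not_ge, Function.LeftInverse.iterate f.apply_symm_apply _ x] using
      deltaChainReach_iterate (f := f) (x := hIter f t x) le_rfl (n := (-t).toNat) (by omega)
  refine (DeltaChainReach.trans (hpt _ (half_pos hδ))
    ((horbit.perturb_left (hfs hts)).mono (by linarith))).mono (by linarith)

end Homeomorph

section Main

variable [MetricSpace X] [CompactSpace X] {p : X} {b : ℝ}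

lemma exists_pos_chainReach_of_infDist_lt (f : X ≃ₜ X) (hp : ChainReach f p p) (hb : 0 < b)
    (hL : LShadowsOn f (Nbhd b (chainClass f p))) :
    ∃ η > 0, ∀ z, ChainReach f z z → infDist z (chainClass f p) < η → ChainReach f p z := by
  set C := chainClass f p
  have hf := CompactSpace.uniformContinuous_of_continuous f.continuous
  have hf' := CompactSpace.uniformContinuous_of_continuous f.symm.continuous
  obtain ⟨δ, hδ, hsh⟩ := hL b hb
  obtain ⟨γ, hγ, hA⟩ := exists_pos_forall_infDist_chainClass_le hf hp hb
  refine ⟨min γ δ, lt_min hγ hδ, fun z hz hzC => ?_⟩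
  have hzγ : infDist z C ≤ γ := hzC.le.trans (min_le_left _ _)
  obtain ⟨w, hwC, hzw⟩ :=
    (isClosed_chainClass hf p).isCompact.exists_infDist_eq_dist ⟨p, hp, hp⟩ z
  obtain ⟨Θ, hΘ0, hΘS, hΘ, hΘlim, hΘz⟩ := exists_seq_tendsto_of_chainReach_self hz
    (lt_min hγ hδ) (S := Nbhd b C)
    fun k c h0 hk hc => hA k c (hc.mono (min_le_left _ _)) (h0 ▸ hzγ) (hk ▸ hzγ)
  have hwC' : ∀ n, (⇑f.symm)^[n] w ∈ C :=
    fun n => (chainClass_symm f p ▸ mapsTo_chainClass hf' p).iterate n hwC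
  have hξS : ∀ i, prependOrbit f w Θ i ∈ Nbhd b C := fun i => by
    unfold prependOrbit
    split_ifs
    · exact (infDist_zero_of_mem (hwC' _)).trans_le hb.le
    · exact hΘS _
  have hwΘ : dist w (Θ 0) ≤ min γ δ := by rw [hΘ0, dist_comm, ← hzw]; exact hzC.le
  obtain ⟨x, -, hbot, htop⟩ := hsh _ hξS <| isLimitPseudoOrbit_prependOrbit f
    (hwΘ.trans (min_le_right _ _)) (fun m => (hΘ m).trans (min_le_right _ _)) hΘlim
  refine (chainReach_of_tendsto_atBot f ?_ hbot).trans (chainReach_of_tendsto_atTop f ?_ htop)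
  · filter_upwards [eventually_lt_atBot 0] with i hi
    simpa [prependOrbit, hi] using (hwC' _).1
  · refine tendsto_natCast_atTop_atTop.frequently (hΘz.mono fun n hn => ?_)
    rwa [prependOrbit, if_neg (by omega), Int.toNat_natCast]

lemma exists_pos_mem_chainClass_of_infDist_lt (f : X ≃ₜ X) (hp : ChainReach f p p) (hb : 0 < b)
    (hL : LShadowsOn f (Nbhd b (chainClass f p))) :
    ∃ η > 0, ∀ z, ChainReach f z z → infDist z (chainClass f p) < η → z ∈ chainClass f p := by
  obtain ⟨η₁, hη₁, h₁⟩ := exists_pos_chainReach_of_infDist_lt f hp hb hL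
  obtain ⟨η₂, hη₂, h₂⟩ := exists_pos_chainReach_of_infDist_lt f.symm
    ((chainReach_symm_iff f).mpr hp) hb (chainClass_symm f p ▸ hL.homeomorph_symm f)
  refine ⟨min η₁ η₂, lt_min hη₁ hη₂, fun z hz hzC =>
    ⟨h₁ z hz (hzC.trans_le (min_le_left _ _)), (chainReach_symm_iff f).mp ?_⟩⟩
  exact h₂ z ((chainReach_symm_iff f).mpr hz)
    (chainClass_symm f p ▸ hzC.trans_le (min_le_right _ _))

end Main

theorem stmt2 [MetricSpace X] [CompactSpace X] (f : X ≃ₜ X)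
    (C : Set X) (hC : IsChainComponent (⇑f) C)
    (b : ℝ) (hb : 0 < b) (hL : LShadowsOn f (Nbhd b C)) :
    IsClopen {x : ChainRec (⇑f) | (x : X) ∈ C} := by
  obtain ⟨p, hp, rfl⟩ := hC.exists_eq_chainClass
  obtain ⟨η, hη, hmem⟩ := exists_pos_mem_chainClass_of_infDist_lt f hp hb hL
  have hopen : {x : ChainRec (⇑f) | (x : X) ∈ chainClass f p} =
      Subtype.val ⁻¹' {u | infDist u (chainClass f p) < η} :=
    Set.ext fun z => ⟨fun hz => show infDist (z : X) _ < η from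
      (infDist_zero_of_mem (x := (z : X)) hz).trans_lt hη, hmem z z.2⟩
  refine ⟨(isClosed_chainClass ?_ p).preimage continuous_subtype_val, hopen ▸ ?_⟩
  · exact CompactSpace.uniformContinuous_of_continuous f.continuous
  · exact (isOpen_lt (continuous_infDist_pt _) continuous_const).preimage continuous_subtype_val
end

section
/- Let f : X → X be a continuous map of a compact metric space, S a closed subset with f(S) ⊆ S, and suppose f has shadowing on B_b(S) for some b > 0. If x ∈ S, y ∈ X \ S and x → y (for every δ > 0 there is a δ-chain from x to y), then x belongs to the boundary ∂S of S. -/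
open Metric Filter Topology Set

variable {X : Type*}

/-!
If `x` were interior to `S`, say `ball x r ⊆ S`, shadowing would keep every fine chain from `x`
uniformly close to `S`: as long as the chain has stayed `ε`-close to `S`, its next point is still
in `B_b(S)` (by uniform continuity and invariance), so the chain so far is `ε`-shadowed by an orbit
starting in `ball x r ⊆ S`; that orbit never leaves `S`, and the next point is again `ε`-close to
`S`. Hence `x` cannot reach the point `y`, which lies at positive distance from the closed set `S`.
-/

variable {Y : Type*}

theorem UniformContinuous.exists_pos_infDist_apply_lt [PseudoMetricSpace X] [PseudoMetricSpace Y]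
    {f : X → Y} (hf : UniformContinuous f) {S : Set X} (hS : S.Nonempty) {T : Set Y}
    (hST : MapsTo f S T) {β : ℝ} (hβ : 0 < β) :
    ∃ η > 0, ∀ x, infDist x S < η → infDist (f x) T < β := by
  obtain ⟨η, hη, hfη⟩ := Metric.uniformContinuous_iff.mp hf β hβ
  refine ⟨η, hη, fun x hx => ?_⟩
  obtain ⟨s, hs, hxs⟩ := (infDist_lt_iff hS).mp hx
  exact (infDist_le_dist_of_mem (hST hs)).trans_lt (hfη hxs)

theorem ShadowsOn.exists_forall_deltaChain_infDist_le [MetricSpace X] {f : X → X}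
    (hf : UniformContinuous f) {S : Set X} (hinv : MapsTo f S S) {b : ℝ} (hb : 0 < b)
    (hsh : ShadowsOn f (Nbhd b S)) {x : X} (hx : x ∈ interior S) {ε : ℝ} (hε : 0 < ε) :
    ∃ δ > 0, ∀ k c, c 0 = x → IsDeltaChain f δ k c →
      ∀ i ≤ k, infDist (c i) S ≤ ε := by
  obtain ⟨r, hr, hball⟩ := Metric.isOpen_iff.mp isOpen_interior x hx
  obtain ⟨η, hη, hstep⟩ :=
    hf.exists_pos_infDist_apply_lt ⟨x, interior_subset hx⟩ hinv (half_pos hb)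
  obtain ⟨ε', hε', hε'ε, hε'b, hε'r, hε'η⟩ : ∃ ε' > 0, ε' ≤ ε ∧ ε' ≤ b ∧ ε' < r ∧ ε' < η :=
    ⟨min (min ε b) (min r η) / 2, by positivity, by grind, by grind, by grind, by grind⟩
  obtain ⟨δ, hδ, hshadow⟩ := hsh ε' hε'
  refine ⟨min δ (b / 2), by positivity, fun k c hc0 hc i hik => ?_⟩
  suffices infDist (c i) S ≤ ε' from this.trans hε'ε
  induction i using Nat.strong_induction_on with
  | _ i ih =>
  cases i with
  | zero =>
    rw [hc0, infDist_zero_of_mem (interior_subset hx)]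
    exact hε'.le
  | succ n =>
    have hnear : ∀ j ≤ n, infDist (c j) S ≤ ε' := fun j hj => ih j (by omega) (by omega)
    have hlast : infDist (c (n + 1)) S ≤ b := calc
      infDist (c (n + 1)) S ≤ infDist (f (c n)) S + dist (c (n + 1)) (f (c n)) :=
        infDist_le_infDist_add_dist
      _ ≤ b / 2 + b / 2 := by
        gcongr
        · exact (hstep _ ((hnear n le_rfl).trans_lt hε'η)).le
        · rw [dist_comm]
          exact (hc n (by omega)).trans (min_le_right _ _)
      _ = b := add_halves b
    have hmem : ∀ j ≤ n + 1, c j ∈ Nbhd b S := fun j hj => by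
      rcases hj.lt_or_eq with hj | rfl
      · exact (hnear j (by omega)).trans hε'b
      · exact hlast
    obtain ⟨z, hz⟩ :=
      hshadow (n + 1) c hmem fun j hj => (hc j (by omega)).trans (min_le_left _ _)
    have hzS : z ∈ S := by
      refine interior_subset (hball ?_)
      simpa [hc0, dist_comm] using (hz 0 (Nat.zero_le _)).trans_lt hε'r
    exact (infDist_le_dist_of_mem (hinv.iterate (n + 1) hzS)).trans (hz (n + 1) le_rfl)

theorem stmt3 [MetricSpace X] [CompactSpace X] (f : X → X) (hf : Continuous f)
    (S : Set X) (hS : IsClosed S) (hinv : f '' S ⊆ S)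
    (b : ℝ) (hb : 0 < b) (hsh : ShadowsOn f (Nbhd b S))
    (x y : X) (hx : x ∈ S) (hy : y ∉ S) (hxy : ChainReach f x y) :
    x ∈ frontier S := by
  refine ⟨subset_closure hx, fun hint => ?_⟩
  have hyS : 0 < infDist y S := (hS.notMem_iff_infDist_pos ⟨x, hx⟩).mp hy
  obtain ⟨δ, hδ, hnear⟩ := hsh.exists_forall_deltaChain_infDist_le
    (CompactSpace.uniformContinuous_of_continuous hf) (mapsTo_iff_image_subset.mpr hinv) hb hint
    (half_pos hyS)
  obtain ⟨k, -, c, hc0, hck, hc⟩ := hxy δ hδ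
  have := hnear k c hc0 hc k le_rfl
  rw [hck] at this
  linarith
end

section
/- Let f : X → X be a homeomorphism of a compact metric space and Λ a closed f-invariant subset such that Λ has nonempty interior, f|_Λ is chain transitive, and f has both shadowing and L-shadowing on B_b(Λ) for some b > 0. Then Λ is clopen in X. In particular, if X is connected then X = Λ and f is a mixing homeomorphism. -/
open Metric Filter Topology Set

variable {X : Type*}

set_option linter.unusedSectionVars false
set_option linter.unusedVariables false


namespace S9

variable {Y : Type*}

section Inv
variable [TopologicalSpace Y] {f : Y ≃ₜ Y} {Λ : Set Y}

lemma mem_next (hinv : ⇑f '' Λ = Λ) {x : Y} (hx : x ∈ Λ) : f x ∈ Λ := by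
  rw [← hinv]; exact Set.mem_image_of_mem _ hx

lemma mem_symm (hinv : ⇑f '' Λ = Λ) {x : Y} (hx : x ∈ Λ) : f.symm x ∈ Λ := by
  rw [← hinv] at hx
  obtain ⟨w, hw, rfl⟩ := hx
  simpa using hw

lemma iterate_mem (hinv : ⇑f '' Λ = Λ) (n : ℕ) {x : Y} (hx : x ∈ Λ) : f^[n] x ∈ Λ := by
  induction n with
  | zero => simpa using hx
  | succ n ih => rw [Function.iterate_succ_apply']; exact mem_next hinv ih

lemma symm_iterate_mem (hinv : ⇑f '' Λ = Λ) (n : ℕ) {x : Y} (hx : x ∈ Λ) :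
    (⇑f.symm)^[n] x ∈ Λ := by
  induction n with
  | zero => simpa using hx
  | succ n ih => rw [Function.iterate_succ_apply']; exact mem_symm hinv ih

lemma mem_of_iterate_mem (hinv : ⇑f '' Λ = Λ) {n : ℕ} {x : Y} (hx : f^[n] x ∈ Λ) : x ∈ Λ := by
  have h : (⇑f.symm)^[n] (f^[n] x) = x := (Function.LeftInverse.iterate f.symm_apply_apply n) x
  rw [← h]; exact symm_iterate_mem hinv n hx

lemma mem_of_symm_iterate_mem (hinv : ⇑f '' Λ = Λ) {n : ℕ} {x : Y}
    (hx : (⇑f.symm)^[n] x ∈ Λ) : x ∈ Λ := by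
  have h : (⇑f)^[n] ((⇑f.symm)^[n] x) = x := (Function.LeftInverse.iterate f.apply_symm_apply n) x
  rw [← h]; exact iterate_mem hinv n hx

end Inv

section Metric
variable [MetricSpace Y]

lemma unif (f : Y ≃ₜ Y) [CompactSpace Y] :
    ∀ ε > (0:ℝ), ∃ η > (0:ℝ), ∀ x y : Y, dist x y ≤ η → dist (f x) (f y) ≤ ε := by
  intro ε hε
  have h := CompactSpace.uniformContinuous_of_continuous f.continuous
  rw [Metric.uniformContinuous_iff] at h
  obtain ⟨η, hη, h⟩ := h ε hε
  exact ⟨η / 2, by linarith, fun x y hxy => le_of_lt (h (lt_of_le_of_lt hxy (by linarith)))⟩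

lemma nearest [CompactSpace Y] {Λ : Set Y} (hc : IsClosed Λ) (hne : Λ.Nonempty) (y : Y) :
    ∃ x ∈ Λ, dist y x = infDist y Λ := by
  obtain ⟨x, hx, h⟩ := hc.isCompact.exists_infDist_eq_dist hne y
  exact ⟨x, hx, h.symm⟩

lemma chain_append {f : Y → Y} {δ : ℝ} {k1 k2 : ℕ} {c1 c2 : ℕ → Y}
    (h1 : IsDeltaChain f δ k1 c1) (h2 : IsDeltaChain f δ k2 c2) (hj : c2 0 = c1 k1) :
    ∃ c : ℕ → Y, c 0 = c1 0 ∧ c (k1 + k2) = c2 k2 ∧ IsDeltaChain f δ (k1 + k2) c := by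
  refine ⟨fun i => if i ≤ k1 then c1 i else c2 (i - k1), by simp, ?_, ?_⟩
  · rcases Nat.eq_zero_or_pos k2 with h | h
    · subst h; simp [← hj]
    · have : ¬ (k1 + k2 ≤ k1) := by omega
      simp [this]
  · intro i hi
    rcases lt_trichotomy i k1 with h | h | h
    · have h1' : i ≤ k1 := le_of_lt h
      have h2' : i + 1 ≤ k1 := h
      simp only [if_pos h1', if_pos h2']
      exact h1 i h
    · subst h
      have hk2 : 0 < k2 := by omega
      have : ¬ (i + 1 ≤ i) := by omega
      simp only [if_pos (le_refl i), this, if_false]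
      have : i + 1 - i = 1 := by omega
      rw [this, ← hj]
      exact h2 0 hk2
    · have h1' : ¬ (i ≤ k1) := by omega
      have h2' : ¬ (i + 1 ≤ k1) := by omega
      simp only [if_neg h1', if_neg h2']
      have e : i + 1 - k1 = (i - k1) + 1 := by omega
      rw [e]
      exact h2 (i - k1) (by omega)

lemma chain_mono {f : Y → Y} {δ δ' : ℝ} {k : ℕ} {c : ℕ → Y} (h : IsDeltaChain f δ k c)
    (hδ : δ ≤ δ') : IsDeltaChain f δ' k c := fun i hi => le_trans (h i hi) hδ

end Metric

section HIter
variable [TopologicalSpace Y]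

lemma hIter_natCast (f : Y ≃ₜ Y) (n : ℕ) (x : Y) : hIter f (n : ℤ) x = (⇑f)^[n] x := by
  simp [hIter]

lemma hIter_nonneg (f : Y ≃ₜ Y) {i : ℤ} (h : 0 ≤ i) (x : Y) :
    hIter f i x = (⇑f)^[i.toNat] x := by simp [hIter, h]

lemma hIter_neg (f : Y ≃ₜ Y) {i : ℤ} (h : i < 0) (x : Y) :
    hIter f i x = (⇑f.symm)^[(-i).toNat] x := by
  simp [hIter, not_le.mpr h]

end HIter

end S9

namespace S9

section Main
variable {Y : Type*} [MetricSpace Y] [CompactSpace Y]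

lemma mem_nbhd_of_mem {Λ : Set Y} {b : ℝ} (hb : 0 ≤ b) {x : Y} (hx : x ∈ Λ) :
    x ∈ Nbhd b Λ := by
  show infDist x Λ ≤ b
  rw [infDist_zero_of_mem hx]; exact hb

lemma stability (f : Y ≃ₜ Y) (Λ : Set Y) (hΛc : IsClosed Λ) (hinv : ⇑f '' Λ = Λ)
    (hne : Λ.Nonempty) (p : Y) (r : ℝ) (hr : 0 < r) (hball : closedBall p r ⊆ Λ)
    (b : ℝ) (hb : 0 < b) (hrb : r ≤ b)
    (hct : ChainTransitiveOn (⇑f) Λ) (hsh : ShadowsOn (⇑f) (Nbhd b Λ)) :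
    ∃ d > 0, d ≤ b ∧ ∀ y : Y, infDist y Λ ≤ d → ∀ n : ℕ, infDist ((⇑f)^[n] y) Λ ≤ b := by
  have hp : p ∈ Λ := hball (mem_closedBall_self hr.le)
  obtain ⟨ηb, hηb, Hb⟩ := unif f b hb
  set ε' : ℝ := min (min ηb r) b with hε'def
  have hε' : 0 < ε' := by positivity
  have hε'r : ε' ≤ r := le_trans (min_le_left _ _) (min_le_right _ _)
  have hε'η : ε' ≤ ηb := le_trans (min_le_left _ _) (min_le_left _ _)
  obtain ⟨δ', hδ', Hsh'⟩ := hsh ε' hε'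
  obtain ⟨ηd, hηd, Hd⟩ := unif f δ' hδ'
  refine ⟨min (min ηd ηb) b, by positivity, min_le_right _ _, ?_⟩
  set d : ℝ := min (min ηd ηb) b with hddef
  have hdηd : d ≤ ηd := le_trans (min_le_left _ _) (min_le_left _ _)
  have hdηb : d ≤ ηb := le_trans (min_le_left _ _) (min_le_right _ _)
  have hdb : d ≤ b := min_le_right _ _
  intro y hy
  obtain ⟨xs, hxs, hdist⟩ := nearest hΛc hne y
  have hyxs : dist y xs ≤ d := by rw [hdist]; exact hy
  have main : ∀ n : ℕ, ∀ j ≤ n, infDist ((⇑f)^[j] y) Λ ≤ b := by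
    intro n
    induction n with
    | zero =>
      intro j hj
      interval_cases j
      simpa using le_trans hy hdb
    | succ n ih =>
      intro j hj
      rcases Nat.lt_or_ge j (n + 1) with h | h
      · exact ih j (by omega)
      · have hj' : j = n + 1 := by omega
        subst hj'
        -- we need a bound  infDist (f^[n] y) Λ ≤ ηb
        have hn : infDist ((⇑f)^[n] y) Λ ≤ ηb := by
          rcases Nat.eq_zero_or_pos n with h0 | h0
          · subst h0; simpa using le_trans hy hdηb
          · -- build the chain from p to xs and then the orbit of y
            obtain ⟨K, hK1, c, hc0, hcK, hcΛ, hchain⟩ := hct p hp xs hxs δ' hδ'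
            set C : ℕ → Y := fun i => if i ≤ K then c i else (⇑f)^[i - K] y with hCdef
            have hCchain : IsDeltaChain (⇑f) δ' (K + n) C := by
              intro i hi
              rcases lt_trichotomy i K with hiK | hiK | hiK
              · have e1 : i ≤ K := hiK.le
                have e2 : i + 1 ≤ K := hiK
                simp only [hCdef, if_pos e1, if_pos e2]
                exact hchain i hiK
              · subst hiK
                have e2 : ¬ (i + 1 ≤ i) := by omega
                simp only [hCdef, if_pos (le_refl i), if_neg e2]
                have e3 : i + 1 - i = 1 := by omega
                rw [e3, hcK, Function.iterate_one]
                exact Hd xs y (by rw [dist_comm]; exact le_trans hyxs hdηd)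
              · have e1 : ¬ (i ≤ K) := by omega
                have e2 : ¬ (i + 1 ≤ K) := by omega
                simp only [hCdef, if_neg e1, if_neg e2]
                have e3 : i + 1 - K = (i - K) + 1 := by omega
                rw [e3, Function.iterate_succ_apply']
                simp [hδ'.le]
            have hCmem : ∀ i ≤ K + n, C i ∈ Nbhd b Λ := by
              intro i hi
              by_cases hiK : i ≤ K
              · simp only [hCdef, if_pos hiK]
                exact mem_nbhd_of_mem hb.le (hcΛ i hiK)
              · simp only [hCdef, if_neg hiK]
                exact ih (i - K) (by omega)
            obtain ⟨u, hu⟩ := Hsh' (K + n) C hCmem hCchain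
            have hu0 : dist p u ≤ ε' := by
              have := hu 0 (by omega)
              simpa [hCdef, hc0] using this
            have huΛ : u ∈ Λ := hball (by
              rw [mem_closedBall, dist_comm]
              exact le_trans hu0 hε'r)
            have hun := hu (K + n) (le_refl _)
            have e1 : ¬ (K + n ≤ K) := by omega
            have e2 : K + n - K = n := by omega
            simp only [hCdef, if_neg e1, e2] at hun
            calc infDist ((⇑f)^[n] y) Λ ≤ dist ((⇑f)^[n] y) ((⇑f)^[K + n] u) :=
                  infDist_le_dist_of_mem (iterate_mem hinv _ huΛ)
              _ ≤ ε' := hun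
              _ ≤ ηb := hε'η
        obtain ⟨w, hw, hwd⟩ := nearest hΛc hne ((⇑f)^[n] y)
        rw [Function.iterate_succ_apply']
        calc infDist ((⇑f) ((⇑f)^[n] y)) Λ ≤ dist ((⇑f) ((⇑f)^[n] y)) (f w) :=
              infDist_le_dist_of_mem (mem_next hinv hw)
          _ ≤ b := Hb _ _ (by rw [hwd]; exact hn)
  exact fun n => main n n (le_refl n)

end Main
end S9

namespace S9

section Main2
variable {Y : Type*} [MetricSpace Y] [CompactSpace Y]

lemma asymp (f : Y ≃ₜ Y) (Λ : Set Y) (hΛc : IsClosed Λ) (hinv : ⇑f '' Λ = Λ)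
    (hne : Λ.Nonempty) (p : Y) (r : ℝ) (hr : 0 < r) (hball : closedBall p r ⊆ Λ)
    (b : ℝ) (hb : 0 < b)
    (hct : ChainTransitiveOn (⇑f) Λ) (hL : LShadowsOn f (Nbhd b Λ)) :
    ∃ d1 > 0, ∀ y : Y, infDist y Λ ≤ d1 → (∀ n : ℕ, infDist ((⇑f)^[n] y) Λ ≤ b) →
      ∃ z ∈ Λ, Tendsto (fun n : ℕ => dist ((⇑f)^[n] y) ((⇑f)^[n] z)) atTop (nhds 0) := by
  have hp : p ∈ Λ := hball (mem_closedBall_self hr.le)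
  obtain ⟨δ1, hδ1, HL⟩ := hL r hr
  refine ⟨min δ1 b, by positivity, ?_⟩
  intro y hy hstab
  obtain ⟨lam, hlam, hlamd⟩ := nearest hΛc hne y
  have hylam : dist y lam ≤ δ1 := by
    rw [hlamd]; exact le_trans hy (min_le_left _ _)
  obtain ⟨K, hK1, c, hc0, hcK, hcΛ, hch⟩ := hct p hp (f.symm lam) (mem_symm hinv hlam) δ1 hδ1
  set J : ℤ := (K : ℤ) + 1 with hJdef
  have hJpos : 0 < J := by omega
  set ξ : ℤ → Y := fun i =>
    if 0 ≤ i then (⇑f)^[i.toNat] y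
    else if -J ≤ i then c (i + J).toNat
    else (⇑f.symm)^[(-(i + J)).toNat] p with hξdef
  have hξnat : ∀ i : ℤ, 0 ≤ i → ξ i = (⇑f)^[i.toNat] y := by
    intro i hi; simp only [hξdef, if_pos hi]
  have hξchain : ∀ i : ℤ, -J ≤ i → i < 0 → ξ i = c (i + J).toNat := by
    intro i h1 h2
    have hn : ¬ (0 ≤ i) := by omega
    simp only [hξdef]; rw [if_neg hn, if_pos h1]
  have hξp : ∀ i : ℤ, i < -J → ξ i = (⇑f.symm)^[(-(i + J)).toNat] p := by
    intro i h1
    have hn1 : ¬ (0 ≤ i) := by omega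
    have hn2 : ¬ (-J ≤ i) := by omega
    simp only [hξdef]; rw [if_neg hn1, if_neg hn2]
  have hmem : ∀ i : ℤ, ξ i ∈ Nbhd b Λ := by
    intro i
    rcases le_or_gt 0 i with h | h
    · rw [hξnat i h]; exact hstab _
    · rcases le_or_gt (-J) i with h2 | h2
      · rw [hξchain i h2 h]
        exact mem_nbhd_of_mem hb.le (hcΛ _ (by omega))
      · rw [hξp i h2]
        exact mem_nbhd_of_mem hb.le (symm_iterate_mem hinv _ hp)
  have herr0 : ∀ i : ℤ, (0 ≤ i ∨ i < -J) → dist (f (ξ i)) (ξ (i + 1)) = 0 := by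
    intro i hi
    rcases hi with h | h
    · rw [hξnat i h, hξnat (i + 1) (by omega)]
      have e : (i + 1).toNat = i.toNat + 1 := by omega
      rw [e, Function.iterate_succ_apply', dist_self]
    · rcases eq_or_lt_of_le (show i ≤ -J - 1 by omega) with h1 | h1
      · rw [hξp i h, show i + 1 = -J by omega, hξchain (-J) (le_refl _) (by omega)]
        have e1 : (-(i + J)).toNat = 1 := by omega
        have e2 : (-J + J).toNat = 0 := by omega
        rw [e1, e2, hc0, Function.iterate_one]
        simp
      · rw [hξp i h, hξp (i + 1) (by omega)]
        have e1 : (-(i + J)).toNat = (-(i + 1 + J)).toNat + 1 := by omega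
        rw [e1, Function.iterate_succ_apply']
        simp
  have hbound : ∀ i : ℤ, dist (f (ξ i)) (ξ (i + 1)) ≤ δ1 := by
    intro i
    rcases le_or_gt 0 i with h | h
    · rw [herr0 i (Or.inl h)]; exact hδ1.le
    · rcases lt_or_ge i (-J) with h2 | h2
      · rw [herr0 i (Or.inr h2)]; exact hδ1.le
      · rcases eq_or_lt_of_le (show i ≤ -1 by omega) with h3 | h3
        · subst h3
          rw [show (-1 : ℤ) + 1 = 0 by norm_num, hξchain (-1) (by omega) (by omega),
            hξnat 0 (le_refl _)]
          have e1 : (-1 + J).toNat = K := by omega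
          rw [e1, hcK]
          simp only [Function.iterate_zero, id_eq, Homeomorph.apply_symm_apply]
          rw [dist_comm]
          exact hylam
        · rw [hξchain i h2 h, hξchain (i + 1) (by omega) (by omega)]
          have e1 : (i + 1 + J).toNat = (i + J).toNat + 1 := by omega
          rw [e1]
          exact hch _ (by omega)
  have hpseudo : IsLimitPseudoOrbit f δ1 ξ := by
    refine ⟨hbound, ?_, ?_⟩
    · refine tendsto_const_nhds.congr' ?_
      rw [Filter.EventuallyEq, eventually_atBot]
      exact ⟨-J - 1, fun i hi => (herr0 i (Or.inr (by omega))).symm⟩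
    · refine tendsto_const_nhds.congr' ?_
      rw [Filter.EventuallyEq, eventually_atTop]
      exact ⟨0, fun i hi => (herr0 i (Or.inl hi)).symm⟩
  obtain ⟨z, hz1, hz2, hz3⟩ := HL ξ hmem hpseudo
  have hzΛ : z ∈ Λ := by
    have h := hz1 (-J)
    rw [hξchain (-J) (le_refl _) (by omega), hIter_neg f (by omega),
      show (-J + J).toNat = 0 by omega, hc0] at h
    have h2 : (⇑f.symm)^[(-(-J)).toNat] z ∈ Λ := hball (by
      rw [mem_closedBall, dist_comm]; exact h)
    exact mem_of_symm_iterate_mem hinv h2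
  refine ⟨z, hzΛ, ?_⟩
  have hcomp : Tendsto (fun n : ℕ => dist (ξ (n : ℤ)) (hIter f (n : ℤ) z)) atTop (nhds 0) :=
    hz3.comp tendsto_natCast_atTop_atTop
  refine hcomp.congr ?_
  intro n
  rw [hξnat (n : ℤ) (by omega), hIter_natCast]
  simp
end Main2
end S9

namespace S9

section Main3
variable {Y : Type*} [MetricSpace Y] [CompactSpace Y]

lemma key_mem (f : Y ≃ₜ Y) (Λ : Set Y) (hΛc : IsClosed Λ) (hinv : ⇑f '' Λ = Λ)
    (hne : Λ.Nonempty) (p : Y) (r : ℝ) (hr : 0 < r) (hball : closedBall p r ⊆ Λ)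
    (b : ℝ) (hb : 0 < b) (hrb : r ≤ b)
    (hct : ChainTransitiveOn (⇑f) Λ) (hsh : ShadowsOn (⇑f) (Nbhd b Λ))
    (hL : LShadowsOn f (Nbhd b Λ)) :
    ∃ d2 > 0, ∀ y : Y, infDist y Λ ≤ d2 → y ∈ Λ := by
  have hp : p ∈ Λ := hball (mem_closedBall_self hr.le)
  obtain ⟨d, hd, hdb, Hstab⟩ := stability f Λ hΛc hinv hne p r hr hball b hb hrb hct hsh
  obtain ⟨d1, hd1, Hasymp⟩ := asymp f Λ hΛc hinv hne p r hr hball b hb hct hL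
  refine ⟨min d d1, by positivity, ?_⟩
  intro y hy
  have hstab : ∀ n : ℕ, infDist ((⇑f)^[n] y) Λ ≤ b :=
    Hstab y (le_trans hy (min_le_left _ _))
  obtain ⟨z, hz, hzt⟩ := Hasymp y (le_trans hy (min_le_right _ _)) hstab
  have hinf : ∀ ε > (0:ℝ), infDist y Λ ≤ ε := by
    intro ε hε
    set ε3 : ℝ := min ε r with hε3def
    have hε3 : 0 < ε3 := by positivity
    obtain ⟨δ2, hδ2, Hs⟩ := hsh ε3 hε3
    have hev : ∀ᶠ n : ℕ in atTop, dist ((⇑f)^[n] y) ((⇑f)^[n] z) < δ2 := by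
      have := hzt.eventually (eventually_lt_nhds hδ2)
      exact this
    obtain ⟨N0, hN0⟩ := eventually_atTop.mp hev
    set N : ℕ := max N0 1 with hNdef
    have hN1 : 1 ≤ N := le_max_right _ _
    have hNd : dist ((⇑f)^[N] y) ((⇑f)^[N] z) ≤ δ2 := (hN0 N (le_max_left _ _)).le
    obtain ⟨K', hK'1, c', hc'0, hc'K, hc'Λ, hc'ch⟩ :=
      hct ((⇑f)^[N] z) (iterate_mem hinv N hz) p hp δ2 hδ2
    set k : ℕ := N + K' with hkdef
    set C : ℕ → Y := fun i => if i < N then (⇑f)^[i] y else c' (i - N) with hCdef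
    have hCchain : IsDeltaChain (⇑f) δ2 k C := by
      intro i hi
      rcases Nat.lt_or_ge (i + 1) N with h1 | h1
      · have h0 : i < N := by omega
        simp only [hCdef, if_pos h0, if_pos h1]
        rw [Function.iterate_succ_apply']
        simp [hδ2.le]
      · rcases Nat.lt_or_ge i N with h2 | h2
        · have e1 : i + 1 = N := by omega
          have e2 : ¬ (i + 1 < N) := by omega
          simp only [hCdef, if_pos h2, if_neg e2]
          have e3 : i + 1 - N = 0 := by omega
          rw [e3, hc'0, ← e1]
          have h5 := hNd
          rw [← e1, Function.iterate_succ_apply'] at h5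
          exact h5
        · have e1 : ¬ (i < N) := by omega
          have e2 : ¬ (i + 1 < N) := by omega
          simp only [hCdef, if_neg e1, if_neg e2]
          have e3 : i + 1 - N = (i - N) + 1 := by omega
          rw [e3]
          exact hc'ch (i - N) (by omega)
    have hCmem : ∀ i ≤ k, C i ∈ Nbhd b Λ := by
      intro i hi
      by_cases h1 : i < N
      · simp only [hCdef, if_pos h1]
        exact hstab i
      · simp only [hCdef, if_neg h1]
        exact mem_nbhd_of_mem hb.le (hc'Λ (i - N) (by omega))
    obtain ⟨u, hu⟩ := Hs k C hCmem hCchain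
    have huk := hu k (le_refl _)
    have e1 : ¬ (k < N) := by omega
    have e2 : k - N = K' := by omega
    simp only [hCdef, if_neg e1, e2, hc'K] at huk
    have huΛ : u ∈ Λ := by
      have : (⇑f)^[k] u ∈ Λ := hball (by
        rw [mem_closedBall, dist_comm]
        exact le_trans huk (le_trans (min_le_right _ _) (le_refl r)))
      exact mem_of_iterate_mem hinv this
    have hu0 := hu 0 (by omega)
    have e3 : (0:ℕ) < N := by omega
    simp only [hCdef, if_pos e3, Function.iterate_zero, id_eq] at hu0
    calc infDist y Λ ≤ dist y u := infDist_le_dist_of_mem huΛ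
      _ ≤ ε3 := hu0
      _ ≤ ε := min_le_left _ _
  have h0 : infDist y Λ = 0 := by
    have h1 : infDist y Λ ≤ 0 := le_of_forall_pos_le_add (by
      intro ε hε
      simpa using hinf ε hε)
    exact le_antisymm h1 infDist_nonneg
  exact (hΛc.mem_iff_infDist_zero hne).mpr h0

end Main3
end S9

namespace S9

section Main4
variable {Y : Type*} [MetricSpace Y] [CompactSpace Y]

lemma clopen_main (f : Y ≃ₜ Y) (Λ : Set Y) (hΛc : IsClosed Λ) (hinv : ⇑f '' Λ = Λ)
    (hint : (interior Λ).Nonempty) (hct : ChainTransitiveOn (⇑f) Λ)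
    (b : ℝ) (hb : 0 < b) (hsh : ShadowsOn (⇑f) (Nbhd b Λ))
    (hL : LShadowsOn f (Nbhd b Λ)) : IsClopen Λ := by
  obtain ⟨p, hp⟩ := hint
  obtain ⟨ε, hε, hball0⟩ := Metric.isOpen_iff.mp isOpen_interior p hp
  set r : ℝ := min (ε / 2) b with hrdef
  have hr : 0 < r := by positivity
  have hball : closedBall p r ⊆ Λ := by
    refine subset_trans (closedBall_subset_ball ?_) (subset_trans hball0 interior_subset)
    calc r ≤ ε / 2 := min_le_left _ _
      _ < ε := by linarith
  have hne : Λ.Nonempty := ⟨p, interior_subset hp⟩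
  obtain ⟨d2, hd2, H⟩ := key_mem f Λ hΛc hinv hne p r hr hball b hb
    (min_le_right _ _) hct hsh hL
  refine ⟨hΛc, ?_⟩
  rw [Metric.isOpen_iff]
  intro x hx
  refine ⟨d2, hd2, fun y hy => H y ?_⟩
  calc infDist y Λ ≤ dist y x := infDist_le_dist_of_mem hx
    _ ≤ d2 := (mem_ball.mp hy).le

end Main4

section Numeric

lemma mul_mem_of_addclosed {S : Set ℕ} (hadd : ∀ a ∈ S, ∀ b ∈ S, a + b ∈ S) :
    ∀ m : ℕ, 1 ≤ m → ∀ s ∈ S, m * s ∈ S := by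
  intro m hm
  induction m with
  | zero => omega
  | succ n ih =>
    intro s hs
    rcases Nat.eq_zero_or_pos n with h | h
    · subst h; simpa using hs
    · have := ih h s hs
      have h2 := hadd _ this _ hs
      have e : n * s + s = (n + 1) * s := by ring
      rwa [e] at h2

lemma semigroup_cofinite {S : Set ℕ} (hadd : ∀ a ∈ S, ∀ b ∈ S, a + b ∈ S) {l : ℕ}
    (hl : 1 ≤ l) (h1 : l ∈ S) (h2 : l + 1 ∈ S) : ∀ n, l * l ≤ n → n ∈ S := by
  intro n hn
  obtain ⟨q, s, hsl, hqs⟩ : ∃ q s, s < l ∧ n = q * l + s := by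
    refine ⟨n / l, n % l, Nat.mod_lt _ (by omega), ?_⟩
    have := Nat.div_add_mod n l
    have h5 : l * (n / l) = (n / l) * l := by ring
    omega
  have hql : s ≤ q := by
    by_contra h
    push_neg at h
    have h3 : (q + 1) * l ≤ l * l := Nat.mul_le_mul_right _ (by omega)
    have h4 : (q + 1) * l = q * l + l := by ring
    omega
  have hdecomp : n = (q - s) * l + s * (l + 1) := by
    have h5 : (q - s) * l = q * l - s * l := Nat.sub_mul _ _ _
    have h6 : s * l ≤ q * l := Nat.mul_le_mul_right _ hql
    have h7 : s * (l + 1) = s * l + s := by ring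
    omega
  have hll : 1 * 1 ≤ l * l := Nat.mul_le_mul hl hl
  rcases Nat.lt_or_ge s q with hq2 | hq2
  · have hq3 : 1 ≤ q - s := by omega
    rcases Nat.eq_zero_or_pos s with h0 | h0
    · subst h0
      rw [hdecomp]
      simpa using mul_mem_of_addclosed hadd (q - 0) hq3 l h1
    · rw [hdecomp]
      exact hadd _ (mul_mem_of_addclosed hadd (q - s) hq3 l h1)
        _ (mul_mem_of_addclosed hadd s h0 (l + 1) h2)
  · have hq3 : q = s := by omega
    have hz : q - s = 0 := by omega
    have h0 : 1 ≤ s := by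
      by_contra h
      push_neg at h
      have hs0 : s = 0 := by omega
      have hq0 : q = 0 := by omega
      rw [hs0, hq0] at hqs
      simp at hqs
      omega
    rw [hdecomp, hz]
    simpa using mul_mem_of_addclosed hadd s h0 (l + 1) h2

lemma subgroup_diff {S : Set ℕ} (hadd : ∀ a ∈ S, ∀ b ∈ S, a + b ∈ S)
    (hpos : ∀ s ∈ S, 1 ≤ s)
    (h1 : (1 : ℤ) ∈ AddSubgroup.closure ((fun n : ℕ => (n : ℤ)) '' S)) :
    ∃ l, 1 ≤ l ∧ l ∈ S ∧ l + 1 ∈ S := by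
  set T : Set ℤ := (fun n : ℕ => (n : ℤ)) '' S with hTdef
  set M := AddSubmonoid.closure T with hMdef
  have hMchar : ∀ x ∈ M, x = 0 ∨ ∃ s ∈ S, x = (s : ℤ) := by
    intro x hx
    induction hx using AddSubmonoid.closure_induction with
    | mem y hy =>
      obtain ⟨s, hs, rfl⟩ := hy
      exact Or.inr ⟨s, hs, rfl⟩
    | zero => exact Or.inl rfl
    | add a c _ _ ha hc =>
      rcases ha with ha | ⟨s, hs, rfl⟩
      · subst ha; simpa using hc
      · rcases hc with hc | ⟨t, ht, rfl⟩
        · subst hc; exact Or.inr ⟨s, hs, by simp⟩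
        · exact Or.inr ⟨s + t, hadd s hs t ht, by push_cast; ring⟩
  have hdiff : ∀ x ∈ AddSubgroup.closure T, ∃ a ∈ M, ∃ c ∈ M, x = a - c := by
    intro x hx
    induction hx using AddSubgroup.closure_induction with
    | mem y hy => exact ⟨y, AddSubmonoid.subset_closure hy, 0, zero_mem _, by ring⟩
    | zero => exact ⟨0, zero_mem _, 0, zero_mem _, by ring⟩
    | add a c _ _ ha hc =>
      obtain ⟨a1, ha1, c1, hc1, rfl⟩ := ha
      obtain ⟨a2, ha2, c2, hc2, rfl⟩ := hc
      exact ⟨a1 + a2, add_mem ha1 ha2, c1 + c2, add_mem hc1 hc2, by ring⟩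
    | neg a _ ha =>
      obtain ⟨a1, ha1, c1, hc1, rfl⟩ := ha
      exact ⟨c1, hc1, a1, ha1, by ring⟩
  obtain ⟨a, ha, c, hc, hac⟩ := hdiff 1 h1
  rcases hMchar a ha with ha' | ⟨s, hs, rfl⟩
  · subst ha'
    rcases hMchar c hc with hc' | ⟨t, ht, rfl⟩
    · subst hc'; norm_num at hac
    · exfalso
      have : (t : ℤ) = -1 := by omega
      omega
  · rcases hMchar c hc with hc' | ⟨t, ht, rfl⟩
    · subst hc'
      have : s = 1 := by
        have : (s : ℤ) = 1 := by omega
        exact_mod_cast this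
      subst this
      exact ⟨1, le_refl _, hs, hadd 1 hs 1 hs⟩
    · have hst : s = t + 1 := by omega
      exact ⟨t, hpos t ht, ht, by rwa [← hst]⟩

end Numeric
end S9

namespace S9

section Mixing
variable {Y : Type*} [MetricSpace Y] [CompactSpace Y] [ConnectedSpace Y]

lemma mixing_main (f : Y ≃ₜ Y) (b : ℝ) (hb : 0 < b)
    (hctu : ChainTransitiveOn (⇑f) Set.univ)
    (hshu : ShadowsOn (⇑f) (Nbhd b Set.univ)) : IsMixing (⇑f) := by
  have EX : ∀ t : ℝ, 0 < t → ∀ x z : Y, ∃ k, k ≥ 1 ∧ ∃ c : ℕ → Y,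
      c 0 = x ∧ c k = z ∧ IsDeltaChain (⇑f) t k c := by
    intro t ht x z
    obtain ⟨k, hk, c, h0, h1, _, hch⟩ := hctu x (mem_univ x) z (mem_univ z) t ht
    exact ⟨k, hk, c, h0, h1, hch⟩
  have hmemN : ∀ (k : ℕ) (c : ℕ → Y), ∀ i ≤ k, c i ∈ Nbhd b Set.univ := by
    intro k c i _
    show infDist (c i) Set.univ ≤ b
    have h1 : infDist (c i) Set.univ ≤ dist (c i) (c i) := infDist_le_dist_of_mem (mem_univ _)
    rw [dist_self] at h1
    exact h1.trans hb.le
  intro U V hU hV hUne hVne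
  obtain ⟨u₀, hu₀⟩ := hUne
  obtain ⟨v₀, hv₀⟩ := hVne
  obtain ⟨ρu, hρu, hbu⟩ := Metric.isOpen_iff.mp hU u₀ hu₀
  obtain ⟨ρv, hρv, hbv⟩ := Metric.isOpen_iff.mp hV v₀ hv₀
  set ε : ℝ := min ρu ρv / 2 with hεdef
  have hε : 0 < ε := by positivity
  have hερu : ε < ρu := by
    have : min ρu ρv ≤ ρu := min_le_left _ _
    rw [hεdef]; by_cases h : ρu ≤ ρv
    · simp [min_eq_left h]; linarith
    · push_neg at h
      have : min ρu ρv = ρv := min_eq_right h.le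
      rw [this]; linarith
  have hερv : ε < ρv := by
    have h1 : min ρu ρv ≤ ρv := min_le_right _ _
    rw [hεdef]; linarith
  obtain ⟨δ, hδ, Hs⟩ := hshu ε hε
  have hδ4 : 0 < δ / 4 := by positivity
  have hδ8 : 0 < δ / 8 := by positivity
  set S : Set ℕ := {k | 1 ≤ k ∧ ∃ c : ℕ → Y, c 0 = u₀ ∧ c k = u₀ ∧
    IsDeltaChain (⇑f) (δ / 2) k c} with hSdef
  have hadd : ∀ a ∈ S, ∀ b' ∈ S, a + b' ∈ S := by
    rintro a ⟨ha1, c1, hc10, hc1k, hc1⟩ b' ⟨hb1, c2, hc20, hc2k, hc2⟩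
    obtain ⟨C, hC0, hCk, hC⟩ := chain_append hc1 hc2 (hc20.trans hc1k.symm)
    exact ⟨by omega, C, by rw [hC0, hc10], by rw [hCk, hc2k], hC⟩
  have hpos : ∀ s ∈ S, 1 ≤ s := fun s hs => hs.1
  set H := AddSubgroup.closure ((fun n : ℕ => (n : ℤ)) '' S) with hHdef
  obtain ⟨m, hm⟩ := Int.subgroup_cyclic H
  set D : ℕ := m.natAbs with hDdef
  have Szero : ∀ s ∈ S, ((s : ℕ) : ZMod D) = 0 := by
    intro s hs
    have h1 : ((s : ℕ) : ℤ) ∈ H := AddSubgroup.subset_closure ⟨s, hs, rfl⟩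
    rw [hm, AddSubgroup.mem_closure_singleton] at h1
    obtain ⟨n, hn⟩ := h1
    have hdvd : m ∣ (s : ℤ) := ⟨n, by rw [← hn, smul_eq_mul]; ring⟩
    have hdvd2 : ((D : ℕ) : ℤ) ∣ (s : ℤ) := Int.natAbs_dvd.mpr hdvd
    rw [ZMod.natCast_eq_zero_iff]
    exact_mod_cast hdvd2
  have cong : ∀ (x : Y) (k₁ k₂ : ℕ),
      (∃ c : ℕ → Y, c 0 = u₀ ∧ c k₁ = x ∧ IsDeltaChain (⇑f) (δ / 4) k₁ c) →
      (∃ c : ℕ → Y, c 0 = u₀ ∧ c k₂ = x ∧ IsDeltaChain (⇑f) (δ / 4) k₂ c) →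
      ((k₁ : ZMod D) = (k₂ : ZMod D)) := by
    rintro x k₁ k₂ ⟨c1, hc10, hc1k, hc1⟩ ⟨c2, hc20, hc2k, hc2⟩
    obtain ⟨mr, hmr, cr, hcr0, hcrk, hcr⟩ := EX (δ / 4) hδ4 x u₀
    obtain ⟨C1, hC10, hC1k, hC1⟩ := chain_append hc1 hcr (hcr0.trans hc1k.symm)
    obtain ⟨C2, hC20, hC2k, hC2⟩ := chain_append hc2 hcr (hcr0.trans hc2k.symm)
    have l1 : k₁ + mr ∈ S := ⟨by omega, C1, by rw [hC10, hc10], by rw [hC1k, hcrk],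
      chain_mono hC1 (by linarith)⟩
    have l2 : k₂ + mr ∈ S := ⟨by omega, C2, by rw [hC20, hc20], by rw [hC2k, hcrk],
      chain_mono hC2 (by linarith)⟩
    have z1 := Szero _ l1
    have z2 := Szero _ l2
    push_cast at z1 z2
    have h3 : (k₁ : ZMod D) + (mr : ZMod D) = (k₂ : ZMod D) + (mr : ZMod D) := by
      rw [z1, z2]
    exact add_right_cancel h3
  set len : Y → ℕ := fun x => (EX (δ / 8) hδ8 u₀ x).choose with hlen
  have lenspec : ∀ x : Y, (len x) ≥ 1 ∧ ∃ c : ℕ → Y, c 0 = u₀ ∧ c (len x) = x ∧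
      IsDeltaChain (⇑f) (δ / 8) (len x) c := fun x => (EX (δ / 8) hδ8 u₀ x).choose_spec
  set Ψ : Y → ZMod D := fun x => ((len x : ℕ) : ZMod D) with hΨ
  have Ψspec : ∀ (x : Y) (k : ℕ),
      (∃ c : ℕ → Y, c 0 = u₀ ∧ c k = x ∧ IsDeltaChain (⇑f) (δ / 4) k c) →
      (k : ZMod D) = Ψ x := by
    intro x k hk
    obtain ⟨_, c, h0, h1, hch⟩ := lenspec x
    exact cong x k (len x) hk ⟨c, h0, h1, chain_mono hch (by linarith)⟩
  have hloc : IsLocallyConstant Ψ := by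
    rw [IsLocallyConstant.iff_exists_open]
    intro x
    refine ⟨ball x (δ / 8), isOpen_ball, mem_ball_self hδ8, ?_⟩
    intro y hy
    obtain ⟨hl1, c, h0, h1, hch⟩ := lenspec x
    set c' : ℕ → Y := fun i => if i = len x then y else c i with hc'
    have hne0 : (0 : ℕ) ≠ len x := by omega
    have h0' : c' 0 = u₀ := by simp only [hc', if_neg hne0]; exact h0
    have h1' : c' (len x) = y := by simp [hc']
    have hch' : IsDeltaChain (⇑f) (δ / 4) (len x) c' := by
      intro i hi
      have h3 : i ≠ len x := by omega
      by_cases h2 : i + 1 = len x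
      · simp only [hc', if_neg h3, if_pos h2]
        calc dist (f (c i)) y ≤ dist (f (c i)) (c (i + 1)) + dist (c (i + 1)) y :=
              dist_triangle _ _ _
          _ ≤ δ / 8 + δ / 8 := add_le_add (hch i hi) (by
              rw [h2, h1, dist_comm]
              exact (mem_ball.mp hy).le)
          _ ≤ δ / 4 := by linarith
      · simp only [hc', if_neg h3, if_neg h2]
        exact le_trans (hch i hi) (by linarith)
    have e1 : ((len x : ℕ) : ZMod D) = Ψ y := Ψspec y (len x) ⟨c', h0', h1', hch'⟩
    rw [← e1]
  have hconst := hloc.apply_eq_of_preconnectedSpace (f u₀) u₀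
  have hfu : (1 : ZMod D) = Ψ (f u₀) := by
    have h4 : ((1 : ℕ) : ZMod D) = Ψ (f u₀) := by
      refine Ψspec (f u₀) 1 ⟨fun i => if i = 0 then u₀ else f u₀, by simp, by simp, ?_⟩
      intro i hi
      interval_cases i
      have hgoal : dist (f u₀) (f u₀) ≤ δ / 4 := by rw [dist_self]; positivity
      simpa using hgoal
    exact_mod_cast h4
  have hup : Ψ u₀ = 0 := by
    obtain ⟨hl1, c, h0, h1, hch⟩ := lenspec u₀
    have hmem : len u₀ ∈ S := ⟨hl1, c, h0, h1, chain_mono hch (by linarith)⟩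
    exact Szero _ hmem
  have hD1 : (1 : ZMod D) = 0 := by rw [hfu, hconst, hup]
  have hDone : D = 1 := by
    have h2 : ((1 : ℕ) : ZMod D) = 0 := by exact_mod_cast hD1
    exact Nat.dvd_one.mp ((ZMod.natCast_eq_zero_iff 1 D).mp h2)
  have h1H : (1 : ℤ) ∈ H := by
    rw [hm, AddSubgroup.mem_closure_singleton]
    rcases Int.natAbs_eq_iff.mp hDone with h | h
    · exact ⟨1, by rw [h]; simp⟩
    · exact ⟨-1, by rw [h]; simp⟩
  obtain ⟨l, hl1, hlS, hlS1⟩ := subgroup_diff hadd hpos h1H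
  have hcof := semigroup_cofinite hadd hl1 hlS hlS1
  obtain ⟨A, hA1, cA, hcA0, hcAk, hcA⟩ := EX (δ / 2) (by positivity) u₀ v₀
  refine ⟨l * l + A, ?_⟩
  intro i hi
  obtain ⟨hiA1, cL, hcL0, hcLk, hcL⟩ := hcof (i - A) (by omega)
  obtain ⟨C, hC0, hCk, hC⟩ := chain_append hcL hcA (hcA0.trans hcLk.symm)
  have hlen2 : (i - A) + A = i := by omega
  obtain ⟨u, hu⟩ := Hs ((i - A) + A) C (hmemN _ _) (chain_mono hC (by linarith))
  have hu0 := hu 0 (by omega)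
  have huk := hu ((i - A) + A) (le_refl _)
  rw [hC0, hcL0] at hu0
  rw [hCk, hcAk, hlen2] at huk
  simp only [Function.iterate_zero, id_eq] at hu0
  refine ⟨(⇑f)^[i] u, ⟨u, ?_, rfl⟩, ?_⟩
  · apply hbu
    rw [mem_ball, dist_comm]
    exact lt_of_le_of_lt hu0 hερu
  · apply hbv
    rw [mem_ball, dist_comm]
    exact lt_of_le_of_lt huk hερv

end Mixing
end S9


theorem stmt9 [MetricSpace X] [CompactSpace X] (f : X ≃ₜ X)
    (Λ : Set X) (hΛc : IsClosed Λ) (hΛinv : ⇑f '' Λ = Λ)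
    (hint : (interior Λ).Nonempty) (hct : ChainTransitiveOn (⇑f) Λ)
    (b : ℝ) (hb : 0 < b) (hsh : ShadowsOn (⇑f) (Nbhd b Λ))
    (hL : LShadowsOn f (Nbhd b Λ)) :
    IsClopen Λ ∧ (ConnectedSpace X → Λ = Set.univ ∧ IsMixing (⇑f)) := by
  have hclopen : IsClopen Λ := S9.clopen_main f Λ hΛc hΛinv hint hct b hb hsh hL
  refine ⟨hclopen, ?_⟩
  intro hconn
  haveI := hconn
  obtain ⟨q, hq⟩ := hint
  have hne : Λ.Nonempty := ⟨q, interior_subset hq⟩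
  have huniv : Λ = Set.univ := hclopen.eq_univ hne
  refine ⟨huniv, ?_⟩
  rw [huniv] at hct hsh
  exact S9.mixing_main f b hb hct hsh
end

section
/- Let f : X → X be a homeomorphism of a compact metric space and Λ an attractor for f. For any x ∈ ∂Λ there exists z ∈ X \ Λ with z → x. -/
open Metric Filter Topology Set

variable {X : Type*}

theorem stmt12 [MetricSpace X] [CompactSpace X] (f : X ≃ₜ X)
    (Λ : Set X) (hΛ : IsAttractor (⇑f) Λ)
    (x : X) (hx : x ∈ frontier Λ) :
    ∃ z, z ∉ Λ ∧ ChainReach (⇑f) z x := by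
  obtain ⟨hclosed, hinv, U, hUopen, hfU, hΛeq⟩ := hΛ
  have hfUU : f '' U ⊆ U := (Set.image_mono subset_closure).trans hfU
  have hnest : ∀ m : ℕ, (⇑f)^[m+1] '' U ⊆ (⇑f)^[m] '' U := by
    intro m
    rw [Function.iterate_succ, Set.image_comp]
    exact Set.image_mono hfUU
  have hanti : ∀ m m' : ℕ, m ≤ m' → (⇑f)^[m'] '' U ⊆ (⇑f)^[m] '' U := by
    intro m m' h
    induction m', h using Nat.le_induction with
    | base => exact subset_rfl
    | succ n hn ih => exact (hnest n).trans ih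
  have hΛU : Λ ⊆ U := by
    rw [hΛeq]
    intro a ha
    simpa using Set.mem_iInter.mp ha 0
  -- points outside Λ converging to x
  have hxcl : x ∈ closure Λᶜ := by
    rw [closure_compl]
    exact hx.2
  obtain ⟨w, hw, hwlim⟩ := mem_closure_iff_seq_limit.mp hxcl
  -- pull back outside U
  have hm : ∀ n : ℕ, ∃ m : ℕ, 1 ≤ m ∧ w n ∉ (⇑f)^[m] '' U := by
    intro n
    have hwn : w n ∉ ⋂ i : ℕ, (⇑f)^[i] '' U := by
      rw [← hΛeq]; exact hw n
    rw [Set.mem_iInter] at hwn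
    push_neg at hwn
    obtain ⟨i, hi⟩ := hwn
    exact ⟨i + 1, Nat.le_add_left 1 i, fun h => hi (hanti i (i+1) (Nat.le_succ i) h)⟩
  choose m hm1 hmU using hm
  have hiter : ∀ (k : ℕ) (a : X), (⇑f)^[k] ((⇑f.symm)^[k] a) = a := by
    intro k a
    exact (Function.LeftInverse.iterate (fun b => f.apply_symm_apply b) k) a
  set y : ℕ → X := fun n => (⇑f.symm)^[m n] (w n) with hy
  have hyU : ∀ n, y n ∈ Uᶜ := by
    intro n hn
    exact hmU n ⟨y n, hn, hiter (m n) (w n)⟩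
  have hKc : IsCompact (Uᶜ : Set X) := hUopen.isClosed_compl.isCompact
  obtain ⟨z, hzU, φ, hφ, hconv⟩ := hKc.tendsto_subseq hyU
  refine ⟨z, fun h => hzU (hΛU h), ?_⟩
  intro δ hδ
  have hδ2 : 0 < δ / 2 := by positivity
  have hfz : Tendsto (fun k => f (y (φ k))) atTop (nhds (f z)) :=
    (f.continuous.continuousAt.tendsto).comp hconv
  have hev1 : ∀ᶠ k in atTop, dist (f (y (φ k))) (f z) < δ / 2 := by
    have := Metric.tendsto_nhds.mp hfz (δ/2) hδ2
    exact this
  have hwφ : Tendsto (fun k => w (φ k)) atTop (nhds x) :=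
    hwlim.comp hφ.tendsto_atTop
  have hev2 : ∀ᶠ k in atTop, dist (w (φ k)) x < δ / 2 :=
    Metric.tendsto_nhds.mp hwφ (δ/2) hδ2
  obtain ⟨k, h1, h2⟩ := (hev1.and hev2).exists
  set n := φ k with hn
  set M := m n with hM
  have hM1 : 1 ≤ M := hm1 n
  have hfMy : (⇑f)^[M] (y n) = w n := hiter (m n) (w n)
  refine ⟨M, hM1, fun i => if i = 0 then z else if i < M then (⇑f)^[i] (y n) else x,
    by simp, by
      have hMne : M ≠ 0 := by omega
      simp only [if_neg hMne, if_neg (lt_irrefl M)], ?_⟩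
  intro i hi
  rcases Nat.eq_zero_or_pos i with hi0 | hipos
  · subst hi0
    simp only [if_pos rfl]
    rcases eq_or_lt_of_le hM1 with hMeq | hMgt
    · -- M = 1 : c 1 = x
      have h11 : ¬ (1 : ℕ) < M := by omega
      simp only [if_neg one_ne_zero, if_neg h11]
      have hfy : f (y n) = w n := by
        have : (⇑f)^[1] (y n) = w n := by rw [← hMeq] at hfMy; exact hfMy
        simpa using this
      have e1 : dist (f z) (f (y n)) ≤ δ/2 := le_of_lt (by rw [dist_comm]; exact h1)
      have e2 : dist (f (y n)) x ≤ δ/2 := by rw [hfy]; exact le_of_lt h2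
      calc dist (f z) x ≤ dist (f z) (f (y n)) + dist (f (y n)) x := dist_triangle _ _ _
        _ ≤ δ/2 + δ/2 := add_le_add e1 e2
        _ = δ := by ring
    · -- M > 1 : c 1 = f (y n)
      have h11 : (1 : ℕ) < M := hMgt
      simp only [if_neg one_ne_zero, if_pos h11, Function.iterate_one]
      rw [dist_comm]
      exact le_of_lt (lt_of_lt_of_le h1 (by linarith))
  · have hine : i ≠ 0 := by omega
    simp only [if_neg hine, if_pos hi]
    have hsucc : f ((⇑f)^[i] (y n)) = (⇑f)^[i+1] (y n) :=
      (Function.iterate_succ_apply' (⇑f) i (y n)).symm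
    rcases eq_or_lt_of_le (Nat.succ_le_of_lt hi) with hieq | hilt
    · -- i + 1 = M
      have h2' : ¬ (i + 1 < M) := by omega
      simp only [if_neg (Nat.succ_ne_zero i), if_neg h2']
      have hieq' : i + 1 = M := hieq
      rw [hsucc, hieq', hfMy]
      exact le_of_lt (lt_of_lt_of_le h2 (by linarith))
    · simp only [if_neg (Nat.succ_ne_zero i), if_pos hilt]
      rw [hsucc, dist_self]
      exact le_of_lt hδ
end

section
/- Let f : X → X be a continuous map of a compact metric space and S a closed set with f(S) = S that is chain stable. Then for every a > 0 there is an attractor Λ for f with S ⊆ Λ ⊆ B_a(S). -/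
open Metric Filter Topology Set

variable {X : Type*}

/-- Key lemma: by chain stability, for small enough `δ`, endpoints of `δ`-chains starting
in `S` stay within `a` of `S`. -/
lemma key_delta [MetricSpace X] [CompactSpace X] (f : X → X) (hf : Continuous f)
    (S : Set X) (hSc : IsClosed S) (hstable : ChainStable f S) {a : ℝ} (ha : 0 < a) :
    ∃ δ > 0, ∀ (k : ℕ) (c : ℕ → X), 1 ≤ k → c 0 ∈ S →
      (∀ i < k, dist (f (c i)) (c (i + 1)) < δ) → infDist (c k) S ≤ a := by
  by_contra h
  push_neg at h
  choose k c hk h0 hchain hfar using fun n : ℕ => h (1 / ((n : ℝ) + 1)) (by positivity)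
  obtain ⟨p, -, φ, hφ, hconv⟩ := isCompact_univ.tendsto_subseq
    (fun n : ℕ => (Set.mem_univ (c n 0, c n (k n)) : (c n 0, c n (k n)) ∈ Set.univ))
  have h1 : Tendsto (fun n => c (φ n) 0) atTop (nhds p.1) :=
    (continuous_fst.tendsto p).comp hconv
  have h2 : Tendsto (fun n => c (φ n) (k (φ n))) atTop (nhds p.2) :=
    (continuous_snd.tendsto p).comp hconv
  have hsS : p.1 ∈ S := hSc.mem_of_tendsto h1 (Filter.Eventually.of_forall fun n => h0 (φ n))
  have hya : a ≤ infDist p.2 S := by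
    refine ge_of_tendsto (((continuous_infDist_pt S).tendsto p.2).comp h2)
      (Filter.Eventually.of_forall fun n => (hfar (φ n)).le)
  have hreach : ChainReach f p.1 p.2 := by
    intro δ hδ
    obtain ⟨η, hη, hcont⟩ := Metric.continuousAt_iff.mp (hf.continuousAt (x := p.1))
      (δ / 3) (by linarith)
    obtain ⟨N₂, hN₂⟩ := exists_nat_one_div_lt (show (0:ℝ) < δ / 3 by linarith)
    have hconv' := Metric.tendsto_atTop.mp hconv (min η (δ / 3)) (lt_min hη (by linarith))
    obtain ⟨N₁, hN₁⟩ := hconv'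
    set N := max N₁ N₂ with hN
    set m := φ N with hm
    have hdp : dist ((c m 0, c m (k m)) : X × X) p < min η (δ / 3) := hN₁ N (le_max_left _ _)
    rw [Prod.dist_eq] at hdp
    have d1 : dist (c m 0) p.1 < η :=
      lt_of_le_of_lt (le_max_left _ _) (lt_of_lt_of_le hdp (min_le_left _ _))
    have d2 : dist (c m (k m)) p.2 < δ / 3 :=
      lt_of_le_of_lt (le_max_right _ _) (lt_of_lt_of_le hdp (min_le_right _ _))
    have d3 : (1 : ℝ) / ((m : ℝ) + 1) < δ / 3 := by
      refine lt_of_le_of_lt ?_ hN₂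
      have hmN : ((N₂ : ℝ) + 1) ≤ ((m : ℝ) + 1) := by
        have : (N₂ : ℕ) ≤ m := le_trans (le_max_right _ _) hφ.le_apply
        push_cast
        exact_mod_cast Nat.succ_le_succ this
      exact one_div_le_one_div_of_le (by positivity) hmN
    set cc := c m with hcc
    set kk := k m with hkk
    refine ⟨kk, hk m, fun i => if i = 0 then p.1 else if i = kk then p.2 else cc i,
      by simp, ?_, ?_⟩
    · have : kk ≠ 0 := by have := hk m; omega
      simp [this]
    · intro i hi
      have hine : i ≠ kk := Nat.ne_of_lt hi
      have e0 : (if i = 0 then p.1 else if i = kk then p.2 else cc i)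
          = if i = 0 then p.1 else cc i := by
        by_cases h : i = 0 <;> simp [h, hine]
      have e1 : (if i + 1 = 0 then p.1 else if i + 1 = kk then p.2 else cc (i + 1))
          = if i + 1 = kk then p.2 else cc (i + 1) := by simp
      beta_reduce
      rw [e0, e1]
      have A : dist (f (if i = 0 then p.1 else cc i)) (f (cc i)) ≤ δ / 3 := by
        by_cases h : i = 0
        · subst h
          simp only [if_pos rfl]
          rw [dist_comm]
          exact (hcont d1).le
        · simp only [if_neg h, dist_self]
          positivity
      have B : dist (f (cc i)) (cc (i + 1)) ≤ δ / 3 :=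
        le_of_lt (lt_trans (hchain m i hi) d3)
      have C : dist (cc (i + 1)) (if i + 1 = kk then p.2 else cc (i + 1)) ≤ δ / 3 := by
        by_cases h : i + 1 = kk
        · simp only [if_pos h]
          rw [h]
          exact d2.le
        · simp only [if_neg h, dist_self]
          positivity
      calc dist (f (if i = 0 then p.1 else cc i)) (if i + 1 = kk then p.2 else cc (i + 1))
          ≤ dist (f (if i = 0 then p.1 else cc i)) (f (cc i)) + dist (f (cc i)) (cc (i + 1))
            + dist (cc (i + 1)) (if i + 1 = kk then p.2 else cc (i + 1)) :=
            dist_triangle4 _ _ _ _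
        _ ≤ δ := by linarith
  have hyS : p.2 ∈ S := hstable p.1 hsS p.2 hreach
  rw [infDist_zero_of_mem hyS] at hya
  linarith

theorem stmt14 [MetricSpace X] [CompactSpace X] (f : X → X) (hf : Continuous f)
    (S : Set X) (hSc : IsClosed S) (hSinv : f '' S = S)
    (hstable : ChainStable f S) :
    ∀ a > 0, ∃ Λ : Set X, IsAttractor f Λ ∧ S ⊆ Λ ∧ Λ ⊆ Nbhd a S := by
  intro a ha
  obtain ⟨δ, hδ, hkey⟩ := key_delta f hf S hSc hstable ha
  set W : Set X := {y | ∃ k, 1 ≤ k ∧ ∃ c : ℕ → X, c 0 ∈ S ∧ c k = y ∧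
    ∀ i < k, dist (f (c i)) (c (i + 1)) < δ} with hWdef
  -- W is open
  have hWopen : IsOpen W := by
    rw [Metric.isOpen_iff]
    rintro y ⟨k, hk, c, h0, hky, hch⟩
    have hsk : k - 1 + 1 = k := by omega
    have hlast : dist (f (c (k - 1))) y < δ := by
      have := hch (k - 1) (by omega)
      rwa [hsk, hky] at this
    refine ⟨δ - dist (f (c (k - 1))) y, by linarith, fun y' hy' => ?_⟩
    rw [Metric.mem_ball] at hy'
    refine ⟨k, hk, Function.update c k y', ?_, Function.update_self _ _ _, ?_⟩
    · rw [Function.update_of_ne (by omega)]; exact h0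
    · intro i hi
      rw [Function.update_of_ne (show i ≠ k by omega)]
      by_cases h : i + 1 = k
      · rw [h, Function.update_self]
        have hik : i = k - 1 := by omega
        subst hik
        calc dist (f (c (k - 1))) y' ≤ dist (f (c (k - 1))) y + dist y y' :=
              dist_triangle _ _ _
          _ < δ := by rw [dist_comm y y']; linarith
      · rw [Function.update_of_ne h]
        exact hch i hi
  -- f (closure W) ⊆ W
  have hWK : f '' closure W ⊆ W := by
    rintro _ ⟨y, hy, rfl⟩
    obtain ⟨η, hη, hcont⟩ := Metric.continuousAt_iff.mp (hf.continuousAt (x := y)) δ hδ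
    obtain ⟨z, hz, hdist⟩ := Metric.mem_closure_iff.mp hy η hη
    obtain ⟨k, hk, c, h0, hkz, hch⟩ := hz
    refine ⟨k + 1, by omega, Function.update c (k + 1) (f y), ?_,
      Function.update_self _ _ _, ?_⟩
    · rw [Function.update_of_ne (by omega)]; exact h0
    · intro i hi
      rw [Function.update_of_ne (show i ≠ k + 1 by omega)]
      by_cases h : i = k
      · subst h
        rw [Function.update_self, hkz]
        exact hcont (by rwa [dist_comm] at hdist)
      · rw [Function.update_of_ne (show i + 1 ≠ k + 1 by omega)]
        exact hch i (by omega)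
  -- S ⊆ W
  have hSW : S ⊆ W := by
    intro x hx
    have hx' : x ∈ f '' S := by rw [hSinv]; exact hx
    obtain ⟨x', hx'S, hfx⟩ := hx'
    refine ⟨1, le_refl 1, fun i => if i = 0 then x' else x, by simpa using hx'S,
      by simp, ?_⟩
    intro i hi
    interval_cases i
    simpa [hfx] using hδ
  set K := closure W with hKdef
  have hKc : IsCompact K := isClosed_closure.isCompact
  have hWsubK : W ⊆ K := subset_closure
  -- iterated images
  have hstep : ∀ i : ℕ, f^[i + 1] '' K ⊆ f^[i] '' W := by
    intro i
    rw [Function.iterate_succ, Set.image_comp]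
    exact Set.image_mono hWK
  set Λ : Set X := ⋂ i : ℕ, f^[i] '' K with hΛdef
  have hΛW : Λ = ⋂ i : ℕ, f^[i] '' W := by
    apply Set.Subset.antisymm
    · intro x hx
      rw [Set.mem_iInter] at hx ⊢
      intro i
      exact hstep i (hx (i + 1))
    · intro x hx
      rw [Set.mem_iInter] at hx ⊢
      intro i
      exact Set.image_mono hWsubK (hx i)
  have hcomp : ∀ i : ℕ, IsCompact (f^[i] '' K) := fun i => hKc.image (hf.iterate i)
  have hΛclosed : IsClosed Λ := isClosed_iInter fun i => (hcomp i).isClosed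
  have hΛK : Λ ⊆ K := by
    intro x hx
    have := Set.mem_iInter.mp hx 0
    simpa using this
  -- f '' Λ = Λ
  have himg : f '' Λ = Λ := by
    apply Set.Subset.antisymm
    · rintro _ ⟨x, hx, rfl⟩
      rw [Set.mem_iInter]
      intro i
      match i with
      | 0 =>
        have hxK : x ∈ K := hΛK hx
        simpa using hWsubK (hWK ⟨x, hxK, rfl⟩)
      | (j + 1) =>
        obtain ⟨w, hw, hwe⟩ := Set.mem_iInter.mp hx j
        exact ⟨w, hw, by rw [Function.iterate_succ_apply', hwe]⟩
    · intro x hx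
      have hA : ∀ n : ℕ, (f^[n] '' K ∩ f ⁻¹' {x}).Nonempty := by
        intro n
        obtain ⟨w, hw, hwe⟩ := Set.mem_iInter.mp hx (n + 1)
        exact ⟨f^[n] w, ⟨w, hw, rfl⟩, by
          simp only [Set.mem_preimage, Set.mem_singleton_iff]
          rw [← Function.iterate_succ_apply' f n w, hwe]⟩
      have hAd : ∀ n : ℕ, (f^[n + 1] '' K ∩ f ⁻¹' {x}) ⊆ (f^[n] '' K ∩ f ⁻¹' {x}) := by
        intro n
        exact Set.inter_subset_inter_left _
          ((hstep n).trans (Set.image_mono hWsubK))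
      have hAcl : ∀ n : ℕ, IsClosed (f^[n] '' K ∩ f ⁻¹' {x}) := fun n =>
        (hcomp n).isClosed.inter (isClosed_singleton.preimage hf)
      obtain ⟨z, hz⟩ := IsCompact.nonempty_iInter_of_sequence_nonempty_isCompact_isClosed
        _ hAd hA ((hcomp 0).inter_right (isClosed_singleton.preimage hf)) hAcl
      rw [Set.mem_iInter] at hz
      refine ⟨z, ?_, (hz 0).2⟩
      rw [Set.mem_iInter]
      exact fun i => (hz i).1
  -- S ⊆ Λ
  have hiterS : ∀ i : ℕ, f^[i] '' S = S := by
    intro i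
    induction i with
    | zero => simp
    | succ j ih => rw [Function.iterate_succ', Set.image_comp, ih, hSinv]
  have hSΛ : S ⊆ Λ := by
    intro x hx
    rw [Set.mem_iInter]
    intro i
    have : x ∈ f^[i] '' S := by rw [hiterS i]; exact hx
    exact Set.image_mono (hSW.trans hWsubK) this
  -- Λ ⊆ Nbhd a S
  have hNclosed : IsClosed (Nbhd a S) := isClosed_le (continuous_infDist_pt S) continuous_const
  have hWN : W ⊆ Nbhd a S := by
    rintro y ⟨k, hk, c, h0, hky, hch⟩
    have := hkey k c hk h0 hch
    rw [hky] at this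
    exact this
  have hΛN : Λ ⊆ Nbhd a S :=
    hΛK.trans (closure_minimal hWN hNclosed)
  exact ⟨Λ, ⟨hΛclosed, himg, W, hWopen, hWK, hΛW⟩, hSΛ, hΛN⟩
end
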